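/- arXiv:1503.02184 — 9 statements merged into one kernel-verified Lean document; each statement's English description precedes it below -/
import Mathlib

section
/- The set ℬⁿ of all non-degenerated compact convex subsets of ℝⁿ whose circumball equals the closed unit ball is compact in the hyperspace of compact convex sets equipped with the Hausdorff metric. -/
/-!
A singleton has circumradius `0`, so the non-degeneracy condition is automatic and ℬⁿ is the set of
convex `K` with circumball `closedBall 0 1`. The Hausdorff metric induces the Vietoris topology,
in which the nonempty compact subsets of the compact unit ball form a compact set; it remains to see
that ℬⁿ is closed. Convexity says that `K` absorbs the images of `K × K` under the continuous maps
`(x, y) ↦ a • x + b • y`, an equation `f(K) ∪ K = K` between continuous maps of the hyperspace.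
Minimality of the radius may be tested on open balls, and `{K | K ⊆ U}` is open for open `U`.
-/

open Metric Set

noncomputable section

/-- `E n` is the Euclidean space `ℝⁿ`. -/
abbrev E (n : ℕ) := EuclideanSpace ℝ (Fin n)

/-- `IsCircumball A c r` : the closed ball of center `c` and radius `r` is the smallest
enclosing ball of `A` (ball of minimal radius containing `A`). -/
def IsCircumball {n : ℕ} (A : Set (E n)) (c : E n) (r : ℝ) : Prop :=
  A ⊆ closedBall c r ∧ ∀ c' r', A ⊆ closedBall c' r' → r ≤ r'

/-- A similarity of `ℝⁿ`: a map of the form `x ↦ u + λ σ x` with `λ > 0` and `σ` orthogonal. -/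
def IsSimilarity {n : ℕ} (g : E n → E n) : Prop :=
  ∃ (u : E n) (l : ℝ) (σ : E n ≃ₗᵢ[ℝ] E n), 0 < l ∧ ∀ x, g x = u + l • σ x

open TopologicalSpace Function

namespace TopologicalSpace.NonemptyCompacts

variable {α : Type*} [TopologicalSpace α]

theorem isClosed_setOf_image2_subset [T2Space α] {f : α → α → α} (hf : Continuous (uncurry f)) :
    IsClosed {K : NonemptyCompacts α | image2 f (K : Set α) K ⊆ K} := by
  let g : NonemptyCompacts α → NonemptyCompacts α := fun K => (K ×ˢ K).map (uncurry f) hf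
  have hg : Continuous g := hf.nonemptyCompacts_map.comp (by fun_prop)
  have hsub : ∀ K : NonemptyCompacts α, g K ⊔ K = K ↔ image2 f (K : Set α) K ⊆ K := fun K => by
    rw [sup_eq_right, ← SetLike.coe_subset_coe, coe_map, coe_prod, image_uncurry_prod]
  simp only [← hsub]
  exact isClosed_eq (hg.sup continuous_id) continuous_id

theorem isClosed_setOf_convex [T2Space α] [AddCommGroup α] [Module ℝ α] [ContinuousAdd α]
    [ContinuousSMul ℝ α] : IsClosed {K : NonemptyCompacts α | Convex ℝ (K : Set α)} := by
  have : {K : NonemptyCompacts α | Convex ℝ (K : Set α)} = ⋂ (a : ℝ) (b : ℝ)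
      (_ : 0 ≤ a ∧ 0 ≤ b ∧ a + b = 1),
        {K : NonemptyCompacts α | image2 (fun x y => a • x + b • y) (K : Set α) K ⊆ K} := by
    ext K
    simp only [mem_iInter, mem_ofPred_eq, image2_subset_iff, Convex, StarConvex]
    grind
  rw [this]
  exact isClosed_iInter fun a => isClosed_iInter fun b => isClosed_iInter fun _ =>
    isClosed_setOf_image2_subset (by fun_prop)

end TopologicalSpace.NonemptyCompacts

section Circumball

variable {n : ℕ}

theorem isCircumball_iff_forall_subset_ball {A : Set (E n)} {c : E n} {r : ℝ} :
    IsCircumball A c r ↔ A ⊆ closedBall c r ∧ ∀ c' r', A ⊆ ball c' r' → r ≤ r' := by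
  refine and_congr_right fun _ => ⟨fun h c' r' hA => h c' r' (hA.trans ball_subset_closedBall),
    fun h c' r' hA => le_of_forall_pos_le_add fun ε hε => h c' (r' + ε) ?_⟩
  exact hA.trans (closedBall_subset_ball (lt_add_of_pos_right r' hε))

theorem IsCircumball.nontrivial {A : Set (E n)} {c : E n} {r : ℝ} (h : IsCircumball A c r)
    (hr : 0 < r) (hA : A.Nonempty) : A.Nontrivial := by
  obtain ⟨a, ha⟩ := hA
  refine (nontrivial_iff_ne_singleton ha).mpr fun hAa => hr.not_ge (h.2 a 0 ?_)
  simp [hAa]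

theorem isClosed_setOf_isCircumball (c : E n) (r : ℝ) :
    IsClosed {K : NonemptyCompacts (E n) | IsCircumball (K : Set (E n)) c r} := by
  simp only [isCircumball_iff_forall_subset_ball, ofPred_and, ofPred_forall]
  refine (NonemptyCompacts.isClosed_subsets_of_isClosed isClosed_closedBall).inter
    (isClosed_iInter fun c' => isClosed_iInter fun r' => ?_)
  by_cases hr : r ≤ r'
  · simp [hr]
  · simp only [hr, imp_false]
    exact (NonemptyCompacts.isOpen_subsets_of_isOpen isOpen_ball).isClosed_compl

end Circumball

theorem stmt2_general {n : ℕ} :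
    IsCompact {K : TopologicalSpace.NonemptyCompacts (E n) |
      Convex ℝ (K : Set (E n)) ∧ (K : Set (E n)).Nontrivial ∧
        IsCircumball (K : Set (E n)) 0 1} := by
  have hB : {K : NonemptyCompacts (E n) | Convex ℝ (K : Set (E n)) ∧ (K : Set (E n)).Nontrivial ∧
      IsCircumball (K : Set (E n)) 0 1} =
      {K : NonemptyCompacts (E n) | Convex ℝ (K : Set (E n))} ∩
        {K : NonemptyCompacts (E n) | IsCircumball (K : Set (E n)) 0 1} := by
    ext K
    exact ⟨fun ⟨hc, _, h⟩ => ⟨hc, h⟩, fun ⟨hc, h⟩ => ⟨hc, h.nontrivial one_pos K.nonempty, h⟩⟩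
  rw [hB]
  exact (NonemptyCompacts.isCompact_subsets_of_isCompact (isCompact_closedBall (0 : E n) 1))
    |>.of_isClosed_subset
      (NonemptyCompacts.isClosed_setOf_convex.inter (isClosed_setOf_isCircumball 0 1))
      fun K hK => hK.2.1

/-- ℬⁿ, as a subset of the hyperspace of nonempty compact subsets of ℝⁿ with the
Hausdorff metric, is compact. -/
theorem stmt2 {n : ℕ} (hn : 2 ≤ n) :
    IsCompact {K : TopologicalSpace.NonemptyCompacts (E n) |
      Convex ℝ (K : Set (E n)) ∧ (K : Set (E n)).Nontrivial ∧
        IsCircumball (K : Set (E n)) 0 1} :=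
  stmt2_general
end
end

section
/- The map A ↦ (ρ(A), č(A), R(A)) is a bijection (in fact homeomorphism) from the space of non-degenerated compact convex subsets of ℝⁿ onto ℬⁿ × ℝⁿ × (0,∞), where ℬⁿ is the family of compact convex sets with circumball equal to the closed unit ball; its inverse is (A, x, λ) ↦ λA + x. -/
/-!
Homotheties `y ↦ l • y + x` with `l > 0` carry circumballs to circumballs, and a nonempty set
has only one circumball, so normalising a body and rescaling it back are mutually inverse.

For continuity, the circumradius is `1`-Lipschitz for the Hausdorff distance. Two balls of the
same radius `M` containing `K` have centres at distance at most `2√(M² - R(K)²)` (their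
intersection lies in a ball about the midpoint, by the parallelogram law); applied to the
circumball of `K` enlarged by `d(K, K')` and to that of `K'`, this makes the circumcentre
continuous. Finally the Hausdorff metric induces the Vietoris topology, in which the image of a
compact set under a jointly continuous family of maps depends continuously on the parameters.
-/

open Metric Set

noncomputable section

/-- The hyperspace of non-degenerated compact convex sets, with the Hausdorff metric. -/
abbrev KHyp (n : ℕ) :=
  {K : TopologicalSpace.NonemptyCompacts (E n) //
    Convex ℝ (K : Set (E n)) ∧ (K : Set (E n)).Nontrivial}

/-- ℬⁿ : those whose circumball is the closed unit ball. -/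
abbrev BHyp (n : ℕ) :=
  {K : TopologicalSpace.NonemptyCompacts (E n) //
    Convex ℝ (K : Set (E n)) ∧ (K : Set (E n)).Nontrivial ∧ IsCircumball (K : Set (E n)) 0 1}

open TopologicalSpace

section Homothety

variable {V : Type*} [AddCommGroup V] [Module ℝ V]

lemma Convex.image_smul_add {A : Set V} (hA : Convex ℝ A) (a : ℝ) (b : V) :
    Convex ℝ ((fun y => a • y + b) '' A) := by
  simpa [← Set.image_smul, Set.image_image, add_comm] using (hA.smul a).translate b

lemma Set.Nontrivial.image_smul_add {A : Set V} (hA : A.Nontrivial) {a : ℝ} (ha : a ≠ 0)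
    (b : V) : ((fun y => a • y + b) '' A).Nontrivial :=
  hA.image ((add_left_injective b).comp (smul_right_injective V ha))

lemma image_smul_add_image_inv_smul_sub {A : Set V} {a : ℝ} (ha : a ≠ 0) (b : V) :
    (fun y => a • y + b) '' ((fun x => a⁻¹ • (x - b)) '' A) = A := by
  simp [Set.image_image, smul_smul, ha]

lemma image_inv_smul_sub_image_smul_add {A : Set V} {a : ℝ} (ha : a ≠ 0) (b : V) :
    (fun x => a⁻¹ • (x - b)) '' ((fun y => a • y + b) '' A) = A := by
  simp [Set.image_image, smul_smul, ha]

lemma image_smul_sub_eq_image_smul_add (A : Set V) (a : ℝ) (b : V) :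
    (fun x => a • (x - b)) '' A = (fun y => a • y + -(a • b)) '' A := by
  simp_rw [smul_sub, sub_eq_add_neg]

end Homothety

lemma Metric.pos_of_nontrivial_subset_closedBall {α : Type*} [MetricSpace α] {A : Set α}
    {c : α} {r : ℝ} (h : A ⊆ closedBall c r) (hA : A.Nontrivial) : 0 < r := by
  by_contra! hr
  exact hA.not_subset_singleton (h.trans ((closedBall_subset_closedBall hr).trans
    (closedBall_zero (x := c)).subset))

lemma Metric.subset_closedBall_add_hausdorffDist {α : Type*} [PseudoMetricSpace α]
    {K K' : Set α} (hK : Bornology.IsBounded K) (hK' : IsCompact K') (hne : K'.Nonempty)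
    {x : α} {r : ℝ} (h : K' ⊆ closedBall x r) :
    K ⊆ closedBall x (r + hausdorffDist K K') := by
  intro a ha
  obtain ⟨b, hb, hab⟩ := hK'.exists_infDist_eq_dist hne a
  have hfin := hausdorffEDist_ne_top_of_nonempty_of_bounded ⟨a, ha⟩ hne hK hK'.isBounded
  calc dist a x ≤ dist a b + dist b x := dist_triangle _ _ _
    _ ≤ hausdorffDist K K' + r :=
      add_le_add (hab ▸ infDist_le_hausdorffDist_of_mem ha hfin) (h hb)
    _ = r + hausdorffDist K K' := add_comm _ _

lemma inter_closedBall_subset_closedBall_midpoint {V : Type*} [NormedAddCommGroup V]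
    [InnerProductSpace ℝ V] (c₁ c₂ : V) (M : ℝ) :
    closedBall c₁ M ∩ closedBall c₂ M ⊆
      closedBall (midpoint ℝ c₁ c₂) (√(M ^ 2 - dist c₁ c₂ ^ 2 / 4)) := by
  rintro z ⟨h₁, h₂⟩
  rw [mem_closedBall] at h₁ h₂ ⊢
  have hap := EuclideanGeometry.dist_sq_add_dist_sq_eq_two_mul_dist_midpoint_sq_add_half_dist_sq
    z c₁ c₂
  refine Real.le_sqrt_of_sq_le ?_
  nlinarith [dist_nonneg (x := z) (y := c₁), dist_nonneg (x := z) (y := c₂)]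

section Circumball

variable {n : ℕ} {A : Set (E n)} {c : E n} {r : ℝ}

lemma IsCircumball.radius_nonneg (h : IsCircumball A c r) (hA : A.Nonempty) : 0 ≤ r :=
  let ⟨_, ha⟩ := hA
  dist_nonneg.trans (h.1 ha)

lemma IsCircumball.sq_dist_le (h : IsCircumball A c r) (hA : A.Nonempty) {c₁ c₂ : E n}
    {M : ℝ} (h₁ : A ⊆ closedBall c₁ M) (h₂ : A ⊆ closedBall c₂ M) :
    dist c₁ c₂ ^ 2 ≤ 4 * (M ^ 2 - r ^ 2) := by
  obtain ⟨a, ha⟩ := hA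
  have ha₁ : dist a c₁ ≤ M := h₁ ha
  have ha₂ : dist a c₂ ≤ M := h₂ ha
  have hd : dist c₁ c₂ ≤ dist a c₁ + dist a c₂ := dist_triangle_left _ _ _
  have hr : r ≤ √(M ^ 2 - dist c₁ c₂ ^ 2 / 4) :=
    h.2 _ _ ((subset_inter h₁ h₂).trans (inter_closedBall_subset_closedBall_midpoint _ _ _))
  have hr' := (Real.le_sqrt (h.radius_nonneg ⟨a, ha⟩)
    (by nlinarith [dist_nonneg (x := c₁) (y := c₂)])).1 hr
  linarith

lemma IsCircumball.unique (hA : A.Nonempty) {c' : E n} {r' : ℝ} (h : IsCircumball A c r)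
    (h' : IsCircumball A c' r') : c = c' ∧ r = r' := by
  have hrr' : r = r' := le_antisymm (h.2 _ _ h'.1) (h'.2 _ _ h.1)
  subst hrr'
  have := h.sq_dist_le hA h.1 h'.1
  exact ⟨dist_le_zero.1 (by nlinarith [dist_nonneg (x := c) (y := c')]), rfl⟩

lemma IsCircumball.image_smul_add (h : IsCircumball A c r) {l : ℝ} (hl : 0 < l) (b : E n) :
    IsCircumball ((fun y => l • y + b) '' A) (l • c + b) (l * r) := by
  have hdist (y z : E n) : dist (l • y + b) (l • z + b) = l * dist y z := by
    rw [dist_add_right, dist_smul₀, Real.norm_of_nonneg hl.le]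
  refine ⟨?_, fun c' r' hA' => ?_⟩
  · rintro _ ⟨y, hy, rfl⟩
    rw [mem_closedBall, hdist]
    exact mul_le_mul_of_nonneg_left (h.1 hy) hl.le
  · have hc' : c' = l • (l⁻¹ • (c' - b)) + b := by
      rw [smul_smul, mul_inv_cancel₀ hl.ne', one_smul, sub_add_cancel]
    have hA : A ⊆ closedBall (l⁻¹ • (c' - b)) (r' / l) := fun y hy => by
      have := hA' ⟨y, hy, rfl⟩
      rw [mem_closedBall, hc', hdist] at this
      rw [mem_closedBall, le_div_iff₀' hl]
      exact this
    have := h.2 _ _ hA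
    rwa [le_div_iff₀' hl] at this

lemma IsCircumball.image_normalize (h : IsCircumball A c r) (hr : 0 < r) :
    IsCircumball ((fun x => r⁻¹ • (x - c)) '' A) 0 1 := by
  rw [image_smul_sub_eq_image_smul_add]
  simpa [inv_mul_cancel₀ hr.ne'] using h.image_smul_add (inv_pos.2 hr) (-(r⁻¹ • c))

end Circumball

section Hyperspace

variable {n : ℕ}

def IsCircumballFun (R : Set (E n) → ℝ) (c : Set (E n) → E n) : Prop :=
  ∀ A : Set (E n), IsCompact A → Convex ℝ A → A.Nontrivial → IsCircumball A (c A) (R A)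

lemma IsCircumballFun.center_radius_eq {R : Set (E n) → ℝ} {c : Set (E n) → E n}
    (hRc : IsCircumballFun R c) {A : Set (E n)} (hc : IsCompact A) (hv : Convex ℝ A)
    (hA : A.Nontrivial) {x : E n} {r : ℝ} (h : IsCircumball A x r) : c A = x ∧ R A = r :=
  (hRc A hc hv hA).unique hA.nonempty h

namespace IsCircumballFun

variable {R : Set (E n) → ℝ} {c : Set (E n) → E n} (hRc : IsCircumballFun R c)
include hRc

lemma isCircumball (K : KHyp n) : IsCircumball (K.1 : Set (E n)) (c K.1) (R K.1) :=
  hRc _ K.1.isCompact K.2.1 K.2.2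

lemma radius_pos (K : KHyp n) : 0 < R K.1 :=
  pos_of_nontrivial_subset_closedBall (hRc.isCircumball K).1 K.2.2

lemma subset_closedBall_add_dist (K K' : KHyp n) :
    (K.1 : Set (E n)) ⊆ closedBall (c K'.1) (R K'.1 + dist K K') :=
  subset_closedBall_add_hausdorffDist K.1.isCompact.isBounded K'.1.isCompact K'.1.nonempty
    (hRc.isCircumball K').1

lemma radius_le_add_dist (K K' : KHyp n) : R K.1 ≤ R K'.1 + dist K K' :=
  (hRc.isCircumball K).2 _ _ (hRc.subset_closedBall_add_dist K K')

lemma continuous_radius : Continuous fun K : KHyp n => R K.1 :=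
  (LipschitzWith.of_le_add hRc.radius_le_add_dist).continuous

/-- Both `c K` and `c K'` are centres of balls of radius `R K' + d(K, K')` containing `K`. -/
lemma sq_dist_center_le (K K' : KHyp n) :
    dist (c K.1) (c K'.1) ^ 2 ≤ 4 * ((R K'.1 + dist K K') ^ 2 - R K.1 ^ 2) :=
  (hRc.isCircumball K).sq_dist_le K.1.nonempty
    (fun _ ha => closedBall_subset_closedBall (hRc.radius_le_add_dist K K')
      ((hRc.isCircumball K).1 ha))
    (hRc.subset_closedBall_add_dist K K')

lemma continuous_center : Continuous fun K : KHyp n => c K.1 := by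
  rw [continuous_iff_continuousAt]
  intro K'
  have hbound : Continuous fun K : KHyp n => √(4 * ((R K'.1 + dist K K') ^ 2 - R K.1 ^ 2)) :=
    Real.continuous_sqrt.comp (continuous_const.mul
      (((continuous_const.add (continuous_id.dist continuous_const)).pow 2).sub
        (hRc.continuous_radius.pow 2)))
  have hlim := hbound.tendsto K'
  simp only [dist_self, add_zero, sub_self, mul_zero, Real.sqrt_zero] at hlim
  rw [ContinuousAt, tendsto_iff_dist_tendsto_zero]
  refine squeeze_zero (fun _ => dist_nonneg) (fun K => ?_) hlim
  exact Real.le_sqrt_of_sq_le (hRc.sq_dist_center_le K K')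

def normalize (K : KHyp n) : BHyp n :=
  ⟨K.1.map (fun x => (R K.1)⁻¹ • (x - c K.1)) (by fun_prop),
    by
      rw [NonemptyCompacts.coe_map, image_smul_sub_eq_image_smul_add]
      exact K.2.1.image_smul_add _ _,
    by
      rw [NonemptyCompacts.coe_map, image_smul_sub_eq_image_smul_add]
      exact K.2.2.image_smul_add (inv_ne_zero (hRc.radius_pos K).ne') _,
    (hRc.isCircumball K).image_normalize (hRc.radius_pos K)⟩

end IsCircumballFun

def BHyp.smulAdd (A : BHyp n) (x : E n) (l : {l : ℝ // 0 < l}) : KHyp n :=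
  ⟨A.1.map (fun y => (l : ℝ) • y + x) (by fun_prop),
    A.2.1.image_smul_add _ _, A.2.2.1.image_smul_add l.2.ne' _⟩

def IsCircumballFun.homeomorph {R : Set (E n) → ℝ} {c : Set (E n) → E n}
    (hRc : IsCircumballFun R c) : KHyp n ≃ₜ BHyp n × E n × {l : ℝ // 0 < l} where
  toFun K := (hRc.normalize K, c K.1, ⟨R K.1, hRc.radius_pos K⟩)
  invFun p := BHyp.smulAdd p.1 p.2.1 p.2.2
  left_inv K := Subtype.ext <| NonemptyCompacts.ext <|
    image_smul_add_image_inv_smul_sub (hRc.radius_pos K).ne' _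
  right_inv := by
    rintro ⟨A, x, l⟩
    obtain ⟨hc, hR⟩ := hRc.center_radius_eq (BHyp.smulAdd A x l).1.isCompact
      (BHyp.smulAdd A x l).2.1 (BHyp.smulAdd A x l).2.2
      (by simpa [BHyp.smulAdd] using A.2.2.2.image_smul_add l.2 x)
    refine Prod.ext (Subtype.ext <| NonemptyCompacts.ext ?_) (Prod.ext hc (Subtype.ext hR))
    change (fun y => (R _)⁻¹ • (y - c _)) '' ((fun y => (l : ℝ) • y + x) '' _) = _
    rw [hc, hR]
    exact image_inv_smul_sub_image_smul_add l.2.ne' x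
  continuous_toFun := by
    have hR := hRc.continuous_radius
    have hc := hRc.continuous_center
    have hRinv := hR.inv₀ fun K => (hRc.radius_pos K).ne'
    refine Continuous.prodMk (Continuous.subtype_mk ?_ _) (hc.prodMk (hR.subtype_mk _))
    exact continuous_subtype_val.nonemptyCompacts_map'
      ((hRinv.comp continuous_fst).smul (continuous_snd.sub (hc.comp continuous_fst)))
  continuous_invFun := Continuous.subtype_mk
    ((continuous_subtype_val.comp continuous_fst).nonemptyCompacts_map' (by fun_prop)) _

end Hyperspace

theorem stmt5_general {n : ℕ} (R : Set (E n) → ℝ) (c : Set (E n) → E n)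
    (hRc : ∀ A : Set (E n), IsCompact A → Convex ℝ A → A.Nontrivial →
      IsCircumball A (c A) (R A)) :
    ∃ Φ : KHyp n ≃ₜ BHyp n × E n × {l : ℝ // 0 < l},
      (∀ K : KHyp n,
        ((Φ K).1.1 : Set (E n))
            = (fun x => (R (K.1 : Set (E n)))⁻¹ • (x - c (K.1 : Set (E n)))) '' (K.1 : Set (E n)) ∧
        (Φ K).2.1 = c (K.1 : Set (E n)) ∧
        ((Φ K).2.2 : ℝ) = R (K.1 : Set (E n))) ∧
      (∀ (A : BHyp n) (x : E n) (l : {l : ℝ // 0 < l}),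
        ((Φ.symm (A, x, l)).1 : Set (E n)) = (fun y => (l : ℝ) • y + x) '' (A.1 : Set (E n))) :=
  ⟨IsCircumballFun.homeomorph hRc, fun _ => ⟨rfl, rfl, rfl⟩, fun _ _ _ => rfl⟩

theorem stmt5 {n : ℕ} (hn : 2 ≤ n) (R : Set (E n) → ℝ) (c : Set (E n) → E n)
    (hRc : ∀ A : Set (E n), IsCompact A → Convex ℝ A → A.Nontrivial →
      IsCircumball A (c A) (R A)) :
    ∃ Φ : KHyp n ≃ₜ BHyp n × E n × {l : ℝ // 0 < l},
      (∀ K : KHyp n,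
        ((Φ K).1.1 : Set (E n))
            = (fun x => (R (K.1 : Set (E n)))⁻¹ • (x - c (K.1 : Set (E n)))) '' (K.1 : Set (E n)) ∧
        (Φ K).2.1 = c (K.1 : Set (E n)) ∧
        ((Φ K).2.2 : ℝ) = R (K.1 : Set (E n))) ∧
      (∀ (A : BHyp n) (x : E n) (l : {l : ℝ // 0 < l}),
        ((Φ.symm (A, x, l)).1 : Set (E n)) = (fun y => (l : ℝ) • y + x) '' (A.1 : Set (E n))) :=
  stmt5_general R c hRc
end
end

section
/- (Jung's theorem, inequality form) For every compact convex set K ⊂ ℝⁿ, the circumradius R(K) and diameter D(K) satisfy √(2(n+1)/n) · R(K) ≤ D(K). -/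
open Metric Set

noncomputable section

open scoped RealInnerProductSpace

lemma circumcenter_mem_hull {n : ℕ} {K : Set (E n)} (hK : IsCompact K)
    {c : E n} {r : ℝ} (hr : 0 < r) (hcb : IsCircumball K c r) :
    c ∈ closure (convexHull ℝ (K ∩ sphere c r)) := by
  by_contra hc
  set S := K ∩ sphere c r with hSdef
  -- get a separating direction v with ε ≤ ⟪v, s - c⟫ for all s ∈ S
  obtain ⟨v, ε, hε, hsep⟩ : ∃ (v : E n) (ε : ℝ), 0 < ε ∧ ∀ s ∈ S, ε ≤ ⟪v, s - c⟫ := by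
    rcases S.eq_empty_or_nonempty with hS | hS
    · exact ⟨0, 1, one_pos, by simp [hS]⟩
    · have hHne : (closure (convexHull ℝ S)).Nonempty :=
        (hS.mono (subset_convexHull ℝ S)).closure
      have hHconv : Convex ℝ (closure (convexHull ℝ S)) := (convex_convexHull ℝ S).closure
      obtain ⟨p, hpH, hpmin⟩ :=
        exists_norm_eq_iInf_of_complete_convex hHne isClosed_closure.isComplete hHconv c
      have hproj := (norm_eq_iInf_iff_real_inner_le_zero hHconv hpH).1 hpmin
      have hpc : p ≠ c := by rintro rfl; exact hc hpH
      have hpc' : (0:ℝ) < ‖p - c‖ ^ 2 := by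
        exact pow_pos (norm_pos_iff.mpr (sub_ne_zero.mpr hpc)) 2
      refine ⟨p - c, ‖p - c‖ ^ 2, hpc', fun s hs => ?_⟩
      have hsH : s ∈ closure (convexHull ℝ S) := subset_closure (subset_convexHull ℝ S hs)
      have h1 : ⟪c - p, s - p⟫ ≤ 0 := hproj s hsH
      have h2 : (0:ℝ) ≤ ⟪p - c, s - p⟫ := by
        have : ⟪c - p, s - p⟫ = -⟪p - c, s - p⟫ := by
          rw [← inner_neg_left, neg_sub]
        linarith [this ▸ h1]
      have h3 : s - c = (s - p) + (p - c) := (sub_add_sub_cancel s p c).symm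
      rw [h3, inner_add_right, real_inner_self_eq_norm_sq]
      linarith
  -- get m' < r bounding the distance of "bad" points
  obtain ⟨m', hm'r, hm'0, hm'⟩ : ∃ m', m' < r ∧ 0 ≤ m' ∧
      ∀ x ∈ K, ⟪v, x - c⟫ ≤ ε / 2 → dist x c ≤ m' := by
    set K' : Set (E n) := K ∩ {x | ⟪v, x - c⟫ ≤ ε / 2} with hK'def
    have hK'cl : IsClosed {x : E n | ⟪v, x - c⟫ ≤ ε / 2} := by
      have hcont : Continuous fun x : E n => ⟪v, x - c⟫ :=
        continuous_const.inner (continuous_id.sub continuous_const)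
      exact isClosed_le hcont continuous_const
    have hK'cpt : IsCompact K' := hK.inter_right hK'cl
    rcases K'.eq_empty_or_nonempty with hK' | hK'
    · refine ⟨0, hr, le_refl 0, fun x hx hxv => ?_⟩
      exact absurd (show x ∈ K' from ⟨hx, hxv⟩) (by simp [hK'])
    · obtain ⟨x₀, hx₀, hx₀max⟩ :=
        hK'cpt.exists_isMaxOn hK' ((continuous_id.dist continuous_const).continuousOn)
      refine ⟨dist x₀ c, ?_, dist_nonneg, fun x hx hxv => hx₀max ⟨hx, hxv⟩⟩
      rcases lt_or_eq_of_le (mem_closedBall.mp (hcb.1 hx₀.1)) with h | h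
      · exact h
      · exfalso
        have hx₀S : x₀ ∈ S := ⟨hx₀.1, h⟩
        have := hsep x₀ hx₀S
        have := hx₀.2
        simp only [mem_setOf_eq] at this
        linarith
  -- shrink the ball
  set nv : ℝ := ‖v‖ with hnv
  have hnv0 : 0 ≤ nv := norm_nonneg v
  set t : ℝ := min ((r - m') / (2 * (nv + 1))) (ε / (2 * (nv + 1) ^ 2)) with htdef
  have ht0 : 0 < t :=
    lt_min (div_pos (by linarith) (by positivity)) (div_pos hε (by positivity))
  have htv1 : t * nv < r - m' := by
    have h1 : t ≤ (r - m') / (2 * (nv + 1)) := min_le_left _ _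
    have h2 : t * nv ≤ (r - m') / (2 * (nv + 1)) * (nv + 1) := by
      apply mul_le_mul h1 (by linarith) hnv0 (div_nonneg (by linarith) (by positivity))
    have h3 : (r - m') / (2 * (nv + 1)) * (nv + 1) = (r - m') / 2 := by
      field_simp
    nlinarith
  have htv2 : t * nv ^ 2 < ε := by
    have h1 : t ≤ ε / (2 * (nv + 1) ^ 2) := min_le_right _ _
    have h2 : t * nv ^ 2 ≤ ε / (2 * (nv + 1) ^ 2) * (nv + 1) ^ 2 := by
      apply mul_le_mul h1 (by nlinarith) (by positivity) (le_of_lt (div_pos hε (by positivity)))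
    have h3 : ε / (2 * (nv + 1) ^ 2) * (nv + 1) ^ 2 = ε / 2 := by
      field_simp
    nlinarith
  set ρ : ℝ := max ((m' + t * nv) ^ 2) (r ^ 2 - t * ε + t ^ 2 * nv ^ 2) with hρ
  have hρlt : ρ < r ^ 2 := by
    apply max_lt
    · have h1 : m' + t * nv < r := by linarith
      have h2 : 0 ≤ m' + t * nv := by positivity
      nlinarith
    · have : t ^ 2 * nv ^ 2 = t * (t * nv ^ 2) := by ring
      nlinarith
  have hsub : K ⊆ closedBall (c + t • v) (Real.sqrt ρ) := by
    intro x hx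
    have hdsq : dist x (c + t • v) ^ 2 ≤ ρ := by
      by_cases hcase : ⟪v, x - c⟫ ≤ ε / 2
      · have h1 : dist x c ≤ m' := hm' x hx hcase
        have h2 : dist x (c + t • v) ≤ dist x c + dist c (c + t • v) := dist_triangle _ _ _
        have h3 : dist c (c + t • v) = t * nv := by
          rw [dist_self_add_right, norm_smul, Real.norm_eq_abs, abs_of_pos ht0]
        have h4 : dist x (c + t • v) ≤ m' + t * nv := by linarith
        have h5 : dist x (c + t • v) ^ 2 ≤ (m' + t * nv) ^ 2 := by
          apply pow_le_pow_left₀ dist_nonneg h4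
        exact h5.trans (le_max_left _ _)
      · push_neg at hcase
        have h1 : dist x (c + t • v) ^ 2 = ‖(x - c) - t • v‖ ^ 2 := by
          rw [dist_eq_norm]; congr 2; abel
        have h2 : ‖(x - c) - t • v‖ ^ 2
            = ‖x - c‖ ^ 2 - 2 * (t * ⟪v, x - c⟫) + t ^ 2 * nv ^ 2 := by
          rw [norm_sub_sq_real, real_inner_smul_right, real_inner_comm, norm_smul,
            Real.norm_eq_abs, abs_of_pos ht0, mul_pow]
        have h3 : ‖x - c‖ ^ 2 ≤ r ^ 2 := by
          have := hcb.1 hx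
          rw [mem_closedBall, dist_eq_norm] at this
          exact pow_le_pow_left₀ (norm_nonneg _) this 2
        have h4 : t * (ε / 2) ≤ t * ⟪v, x - c⟫ :=
          mul_le_mul_of_nonneg_left hcase.le ht0.le
        have : dist x (c + t • v) ^ 2 ≤ r ^ 2 - t * ε + t ^ 2 * nv ^ 2 := by
          rw [h1, h2]; linarith
        exact this.trans (le_max_right _ _)
    rw [mem_closedBall]
    have hρ0 : 0 ≤ ρ := le_max_of_le_left (by positivity)
    nlinarith [Real.sq_sqrt hρ0, Real.sqrt_nonneg ρ, dist_nonneg (x := x) (y := c + t • v)]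
  have hle := hcb.2 _ _ hsub
  have : Real.sqrt ρ < r := by
    rw [show r = Real.sqrt (r ^ 2) by rw [Real.sqrt_sq hr.le]]
    exact Real.sqrt_lt_sqrt (le_max_of_le_left (by positivity)) hρlt
  linarith

/-- Jung's theorem. -/
theorem stmt8 {n : ℕ} (hn : 2 ≤ n) (K : Set (E n)) (hK : IsCompact K) (hKc : Convex ℝ K)
    (c : E n) (r : ℝ) (hcb : IsCircumball K c r) :
    Real.sqrt (2 * ((n : ℝ) + 1) / n) * r ≤ Metric.diam K := by
  classical
  have hKne : K.Nonempty := by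
    rcases K.eq_empty_or_nonempty with h | h
    · exfalso
      have := hcb.2 c (r - 1) (by simp [h])
      linarith
    · exact h
  obtain ⟨x₀, hx₀⟩ := hKne
  have hr0 : 0 ≤ r := le_trans dist_nonneg (mem_closedBall.mp (hcb.1 hx₀))
  rcases eq_or_lt_of_le hr0 with hr | hr
  · rw [← hr, mul_zero]
    exact diam_nonneg
  set D := Metric.diam K with hDdef
  have hD0 : 0 ≤ D := diam_nonneg
  have hn0 : (0:ℝ) < n := by exact_mod_cast Nat.pos_of_ne_zero (by omega)
  have hn1 : (0:ℝ) < (n:ℝ) + 1 := by linarith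
  have key : 2 * r ^ 2 ≤ D ^ 2 * ((n:ℝ) / ((n:ℝ) + 1)) := by
    refine le_of_forall_pos_le_add fun δ hδ => ?_
    have hcl := circumcenter_mem_hull hK hr hcb
    rw [Metric.mem_closure_iff] at hcl
    obtain ⟨q, hq, hqd⟩ := hcl (δ / (2*r+1)) (by positivity)
    rw [convexHull_eq_union] at hq
    simp only [Set.mem_iUnion] at hq
    obtain ⟨t, hts, hai, hqt⟩ := hq
    -- cardinality bound
    have hcard : t.card ≤ n + 1 := by
      have h1 := hai.card_le_finrank_succ
      have h2 : Module.finrank ℝ (vectorSpan ℝ (Set.range ((↑) : {x // x ∈ t} → E n))) ≤ n := by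
        have h3 := Submodule.finrank_le (vectorSpan ℝ (Set.range ((↑) : {x // x ∈ t} → E n)))
        rwa [finrank_euclideanSpace_fin] at h3
      have h4 : Fintype.card {x // x ∈ t} = t.card := Fintype.card_coe t
      omega
    -- convex combination
    rw [Finset.convexHull_eq] at hqt
    obtain ⟨w, hw0, hw1, hwc⟩ := hqt
    rw [Finset.centerMass_eq_of_sum_1 _ _ hw1] at hwc
    simp only [id] at hwc
    have hnorm : ∀ i ∈ t, ‖i - c‖ = r := by
      intro i hi
      have : i ∈ sphere c r := (hts (Finset.mem_coe.mpr hi)).2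
      rwa [mem_sphere, dist_eq_norm] at this
    have hzero : ∑ i ∈ t, w i • (i - c) = q - c := by
      simp only [smul_sub]
      rw [Finset.sum_sub_distrib, hwc, ← Finset.sum_smul, hw1, one_smul]
    have hinner : ∀ j : E n, ∑ i ∈ t, w i * ⟪i - c, j - c⟫ = ⟪q - c, j - c⟫ := by
      intro j
      calc ∑ i ∈ t, w i * ⟪i - c, j - c⟫
          = ∑ i ∈ t, ⟪w i • (i - c), j - c⟫ :=
            Finset.sum_congr rfl fun i _ => (real_inner_smul_left _ _ _).symm
        _ = ⟪∑ i ∈ t, w i • (i - c), j - c⟫ := (sum_inner _ _ _).symm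
        _ = ⟪q - c, j - c⟫ := by rw [hzero]
    have hqcr : ‖q - c‖ ≤ δ / (2*r+1) := by
      rw [← dist_eq_norm, dist_comm]
      exact le_of_lt hqd
    -- lower bound for the weighted sums
    have key1 : ∀ j ∈ t, 2*r^2 - 2*(δ/(2*r+1))*r ≤ ∑ i ∈ t, w i * ‖i - j‖^2 := by
      intro j hj
      have e1 : ∑ i ∈ t, w i * ‖i - j‖^2
          = 2*r^2*(∑ i ∈ t, w i) - 2*∑ i ∈ t, w i * ⟪i - c, j - c⟫ := by
        rw [Finset.mul_sum, Finset.mul_sum, ← Finset.sum_sub_distrib]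
        refine Finset.sum_congr rfl fun i hi => ?_
        have h1 : ‖i - j‖^2 = ‖(i - c) - (j - c)‖^2 := by rw [sub_sub_sub_cancel_right]
        rw [h1, norm_sub_sq_real, hnorm i hi, hnorm j hj]
        ring
      rw [e1, hw1, hinner j]
      have h2 : ⟪q - c, j - c⟫ ≤ δ/(2*r+1) * r := by
        calc ⟪q - c, j - c⟫ ≤ ‖q - c‖ * ‖j - c‖ := real_inner_le_norm _ _
          _ ≤ δ/(2*r+1) * r := by
              rw [hnorm j hj]
              exact mul_le_mul_of_nonneg_right hqcr hr0
      linarith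
    -- upper bound
    have key2 : ∀ j ∈ t, ∑ i ∈ t, w i * ‖i - j‖^2 ≤ (1 - w j) * D^2 := by
      intro j hj
      have e0 : ∑ i ∈ t, w i * ‖i - j‖^2 = ∑ i ∈ t.erase j, w i * ‖i - j‖^2 := by
        refine (Finset.sum_erase _ ?_).symm
        simp
      have e1 : ∑ i ∈ t.erase j, w i * ‖i - j‖^2 ≤ ∑ i ∈ t.erase j, w i * D^2 := by
        refine Finset.sum_le_sum fun i hi => ?_
        have hiK : i ∈ K := (hts (Finset.mem_coe.mpr (Finset.mem_of_mem_erase hi))).1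
        have hjK : j ∈ K := (hts (Finset.mem_coe.mpr hj)).1
        have hd : ‖i - j‖ ≤ D := by
          rw [← dist_eq_norm]
          exact dist_le_diam_of_mem hK.isBounded hiK hjK
        have hsq : ‖i - j‖^2 ≤ D^2 := pow_le_pow_left₀ (norm_nonneg _) hd 2
        exact mul_le_mul_of_nonneg_left hsq (hw0 i (Finset.mem_of_mem_erase hi))
      have e2 : ∑ i ∈ t.erase j, w i * D^2 = (1 - w j) * D^2 := by
        rw [← Finset.sum_mul, Finset.sum_erase_eq_sub hj, hw1]
      rw [e0, ← e2]
      exact e1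
    -- combine
    have sum1 : 2*r^2 - 2*(δ/(2*r+1))*r ≤ ∑ j ∈ t, w j * ((1 - w j) * D^2) := by
      have l1 : ∑ j ∈ t, w j * (2*r^2 - 2*(δ/(2*r+1))*r) = 2*r^2 - 2*(δ/(2*r+1))*r := by
        rw [← Finset.sum_mul, hw1, one_mul]
      rw [← l1]
      refine Finset.sum_le_sum fun j hj => ?_
      exact mul_le_mul_of_nonneg_left ((key1 j hj).trans (key2 j hj)) (hw0 j hj)
    have sum2 : ∑ j ∈ t, w j * ((1 - w j) * D^2) = (1 - ∑ j ∈ t, w j^2) * D^2 := by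
      calc ∑ j ∈ t, w j * ((1 - w j) * D^2) = (∑ j ∈ t, (w j - w j^2)) * D^2 := by
            rw [Finset.sum_mul]
            exact Finset.sum_congr rfl fun j _ => by ring
        _ = (1 - ∑ j ∈ t, w j^2) * D^2 := by rw [Finset.sum_sub_distrib, hw1]
    have htne : t.Nonempty := by
      rcases t.eq_empty_or_nonempty with h | h
      · rw [h] at hw1; simp at hw1
      · exact h
    have hcpos : (0:ℝ) < (t.card:ℝ) := by exact_mod_cast Finset.card_pos.mpr htne
    have hcs : (1:ℝ) ≤ (t.card:ℝ) * ∑ j ∈ t, w j^2 := by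
      have h := sq_sum_le_card_mul_sum_sq (s := t) (f := w)
      rw [hw1, one_pow] at h
      exact_mod_cast h
    have hc1 : (t.card:ℝ) ≤ (n:ℝ) + 1 := by exact_mod_cast hcard
    have hsum_sq : 1/((n:ℝ)+1) ≤ ∑ j ∈ t, w j^2 := by
      have h1 : 1/(t.card:ℝ) ≤ ∑ j ∈ t, w j^2 := by
        rw [div_le_iff₀ hcpos]
        nlinarith
      have h2 : 1/((n:ℝ)+1) ≤ 1/(t.card:ℝ) := one_div_le_one_div_of_le hcpos hc1
      linarith
    have hfin : (1 - ∑ j ∈ t, w j^2) * D^2 ≤ D^2 * ((n:ℝ) / ((n:ℝ)+1)) := by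
      have e : D^2 * ((n:ℝ)/((n:ℝ)+1)) = (1 - 1/((n:ℝ)+1)) * D^2 := by
        field_simp
        ring
      rw [e]
      apply mul_le_mul_of_nonneg_right _ (by positivity)
      linarith
    have hδ' : 2*(δ/(2*r+1))*r ≤ δ := by
      have e : 2*(δ/(2*r+1))*r = (2*δ*r)/(2*r+1) := by ring
      rw [e, div_le_iff₀ (by positivity)]
      nlinarith
    linarith
  have final : 2 * ((n:ℝ) + 1) / n * r^2 ≤ D^2 := by
    rw [div_mul_eq_mul_div, div_le_iff₀ hn0]
    have h1 : 2*r^2 * ((n:ℝ)+1) ≤ D^2 * ((n:ℝ)/((n:ℝ)+1)) * ((n:ℝ)+1) :=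
      mul_le_mul_of_nonneg_right key hn1.le
    have e : D^2 * ((n:ℝ)/((n:ℝ)+1)) * ((n:ℝ)+1) = D^2 * n := by
      field_simp
    rw [e] at h1
    linarith
  calc Real.sqrt (2 * ((n:ℝ) + 1) / n) * r = Real.sqrt (2 * ((n:ℝ) + 1) / n * r^2) := by
        rw [Real.sqrt_mul (by positivity) (r^2), Real.sqrt_sq hr.le]
    _ ≤ Real.sqrt (D^2) := Real.sqrt_le_sqrt final
    _ = D := Real.sqrt_sq hD0
end
end

section
/- Let K, L ⊂ ℝⁿ be compact convex sets contained in the closed unit ball 𝔹 with circumball equal to 𝔹, and let r(K), r(L) denote their inradii. Then the pseudometric ⊙(K,L) = inf{d_H(σK, L) : σ ∈ O(n)} satisfies ⊙(K,L) ≤ 2·max{1 − r(K), 1 − r(L)}. -/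
open Metric Set

noncomputable section

/-- The inradius of a set: largest radius of a closed ball contained in it. -/
def inradius {n : ℕ} (A : Set (E n)) : ℝ :=
  sSup {r : ℝ | ∃ c : E n, closedBall c r ⊆ A}

lemma ballsub {n : ℕ} (hn : 2 ≤ n) {c : E n} {ρ : ℝ} (hρ : 0 ≤ ρ)
    (h : closedBall c ρ ⊆ closedBall (0 : E n) 1) : ‖c‖ + ρ ≤ 1 := by
  rcases eq_or_ne c 0 with rfl | hc
  · have hmem : (EuclideanSpace.single (⟨0, by omega⟩ : Fin n) ρ : E n) ∈ closedBall (0 : E n) ρ := by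
      simp [mem_closedBall, dist_zero_right, EuclideanSpace.norm_single, abs_of_nonneg hρ]
    have h2 := h hmem
    simp [mem_closedBall, dist_zero_right, EuclideanSpace.norm_single, abs_of_nonneg hρ] at h2
    simpa using h2
  · have hcn : (0:ℝ) < ‖c‖ := norm_pos_iff.mpr hc
    set y : E n := (1 + ρ / ‖c‖) • c with hy
    have hmem : y ∈ closedBall c ρ := by
      have : y - c = (ρ / ‖c‖) • c := by
        rw [hy]; rw [sub_eq_iff_eq_add]; rw [add_smul, one_smul]; ring_nf; exact add_comm _ _
      rw [mem_closedBall, dist_eq_norm, this, norm_smul]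
      rw [Real.norm_eq_abs, abs_of_nonneg (by positivity)]
      rw [div_mul_cancel₀ _ (ne_of_gt hcn)]
    have h2 := h hmem
    rw [mem_closedBall, dist_zero_right, hy, norm_smul, Real.norm_eq_abs,
      abs_of_nonneg (by positivity)] at h2
    have : (1 + ρ / ‖c‖) * ‖c‖ = ‖c‖ + ρ := by field_simp
    linarith [this ▸ h2]

lemma approx' {n : ℕ} {L : Set (E n)} {c : E n} {ρ : ℝ} (hρ : 0 ≤ ρ) (hc1 : ‖c‖ + ρ ≤ 1)
    (hball : closedBall c ρ ⊆ L) {x : E n} (hx : ‖x‖ ≤ 1) :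
    ∃ y ∈ L, dist x y ≤ 2 * (1 - ρ) := by
  have hρ1 : ρ ≤ 1 := by linarith [norm_nonneg c]
  by_cases hd : dist x c ≤ ρ
  · exact ⟨x, hball (mem_closedBall.mpr hd), by rw [dist_self]; linarith⟩
  · push_neg at hd
    have hdpos : 0 < dist x c := lt_of_le_of_lt hρ hd
    refine ⟨c + (ρ / dist x c) • (x - c), hball ?_, ?_⟩
    · rw [mem_closedBall, dist_eq_norm]
      have h0 : c + (ρ / dist x c) • (x - c) - c = (ρ / dist x c) • (x - c) := by abel
      rw [h0, norm_smul, Real.norm_eq_abs, abs_of_nonneg (by positivity), ← dist_eq_norm x c,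
        div_mul_cancel₀ _ (ne_of_gt hdpos)]
    · have h1 : x - (c + (ρ / dist x c) • (x - c)) = (1 - ρ / dist x c) • (x - c) := by
        rw [sub_smul, one_smul]; abel
      have ht : ρ / dist x c ≤ 1 := (div_le_one hdpos).mpr hd.le
      rw [dist_eq_norm, h1, norm_smul, Real.norm_eq_abs, abs_of_nonneg (by linarith),
        ← dist_eq_norm x c]
      have h2 : (1 - ρ / dist x c) * dist x c = dist x c - ρ := by field_simp
      rw [h2]
      have h3 : dist x c ≤ ‖x‖ + ‖c‖ := by rw [dist_eq_norm]; exact norm_sub_le _ _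
      linarith

/-- From a nonempty compact-free setup: key facts about the inradius set. -/
lemma inradius_facts {n : ℕ} (hn : 2 ≤ n) {L : Set (E n)} (hLB : L ⊆ closedBall 0 1)
    (hcbL : IsCircumball L 0 1) :
    (0 : ℝ) ∈ {r : ℝ | ∃ c : E n, closedBall c r ⊆ L} ∧ inradius L ≤ 1 := by
  have hne : L.Nonempty := by
    by_contra h
    rw [not_nonempty_iff_eq_empty] at h
    have := hcbL.2 0 0 (by simp [h])
    linarith
  obtain ⟨p, hp⟩ := hne
  have h0 : (0 : ℝ) ∈ {r : ℝ | ∃ c : E n, closedBall c r ⊆ L} :=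
    ⟨p, by rw [closedBall_zero]; simpa using hp⟩
  refine ⟨h0, csSup_le ⟨0, h0⟩ ?_⟩
  rintro ρ ⟨c, hc⟩
  rcases le_or_gt ρ 0 with h | h
  · linarith
  · have := ballsub hn h.le (hc.trans hLB)
    linarith [norm_nonneg c]

/-- Main approximation: for every ε > 0 there is a ball of radius ≥ inradius − ε, ≥ 0, in L. -/
lemma exists_good_ball {n : ℕ} (hn : 2 ≤ n) {L : Set (E n)} (hLB : L ⊆ closedBall 0 1)
    (hcbL : IsCircumball L 0 1) {δ : ℝ} (hδ : 0 < δ) :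
    ∃ c ρ, 0 ≤ ρ ∧ inradius L - δ ≤ ρ ∧ ‖c‖ + ρ ≤ 1 ∧ closedBall c ρ ⊆ L := by
  obtain ⟨h0, _⟩ := inradius_facts hn hLB hcbL
  have hM0 : 0 ≤ inradius L := le_csSup ⟨1, by
    rintro ρ ⟨c, hc⟩
    rcases le_or_gt ρ 0 with h | h
    · linarith
    · have := ballsub hn h.le (hc.trans hLB); linarith [norm_nonneg c]⟩ h0
  obtain ⟨ρ, hρS, hρgt⟩ := exists_lt_of_lt_csSup ⟨0, h0⟩
    (show inradius L - δ < inradius L by linarith)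
  rcases le_or_gt 0 ρ with hρ0 | hρ0
  · obtain ⟨c, hc⟩ := hρS
    exact ⟨c, ρ, hρ0, hρgt.le, ballsub hn hρ0 (hc.trans hLB), hc⟩
  · obtain ⟨c, hc⟩ := h0
    exact ⟨c, 0, le_refl 0, by linarith, by simpa using ballsub hn le_rfl (hc.trans hLB), hc⟩

theorem stmt11 {n : ℕ} (hn : 2 ≤ n) (K L : Set (E n)) (hK : IsCompact K) (hKc : Convex ℝ K)
    (hL : IsCompact L) (hLc : Convex ℝ L)
    (hKB : K ⊆ closedBall 0 1) (hLB : L ⊆ closedBall 0 1)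
    (hcbK : IsCircumball K 0 1) (hcbL : IsCircumball L 0 1) :
    (⨅ σ : E n ≃ₗᵢ[ℝ] E n, Metric.hausdorffDist (⇑σ '' K) L) ≤
      2 * max (1 - inradius K) (1 - inradius L) := by
  have hbdd : BddBelow (Set.range fun σ : E n ≃ₗᵢ[ℝ] E n =>
      Metric.hausdorffDist (⇑σ '' K) L) := by
    refine ⟨0, ?_⟩
    rintro _ ⟨σ, rfl⟩
    exact hausdorffDist_nonneg
  have h1 : (⨅ σ : E n ≃ₗᵢ[ℝ] E n, Metric.hausdorffDist (⇑σ '' K) L) ≤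
      Metric.hausdorffDist (⇑(LinearIsometryEquiv.refl ℝ (E n)) '' K) L :=
    ciInf_le hbdd _
  have himg : ⇑(LinearIsometryEquiv.refl ℝ (E n)) '' K = K := by
    simp
  rw [himg] at h1
  refine h1.trans ?_
  have hMK : inradius K ≤ 1 := (inradius_facts hn hKB hcbK).2
  have hML : inradius L ≤ 1 := (inradius_facts hn hLB hcbL).2
  refine le_of_forall_pos_le_add ?_
  intro ε hε
  obtain ⟨cK, ρK, hρK0, hρKge, hρKc, hρKball⟩ :=
    exists_good_ball hn hKB hcbK (half_pos hε)
  obtain ⟨cL, ρL, hρL0, hρLge, hρLc, hρLball⟩ :=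
    exists_good_ball hn hLB hcbL (half_pos hε)
  apply hausdorffDist_le_of_mem_dist
  · have : (0:ℝ) ≤ 1 - inradius L := by linarith
    have h2 : 1 - inradius L ≤ max (1 - inradius K) (1 - inradius L) := le_max_right _ _
    linarith
  · intro x hx
    have hx1 : ‖x‖ ≤ 1 := by simpa [mem_closedBall, dist_zero_right] using hKB hx
    obtain ⟨y, hy, hdy⟩ := approx' hρL0 hρLc hρLball hx1
    refine ⟨y, hy, hdy.trans ?_⟩
    have : 1 - inradius L ≤ max (1 - inradius K) (1 - inradius L) := le_max_right _ _
    linarith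
  · intro y hy
    have hy1 : ‖y‖ ≤ 1 := by simpa [mem_closedBall, dist_zero_right] using hLB hy
    obtain ⟨x, hx, hdx⟩ := approx' hρK0 hρKc hρKball hy1
    refine ⟨x, hx, ?_⟩
    refine hdx.trans ?_
    have : 1 - inradius K ≤ max (1 - inradius K) (1 - inradius L) := le_max_left _ _
    linarith
end
end

section
/- If c + r𝔹 ⊆ L ⊆ 𝔹 for some c ∈ ℝⁿ and r ∈ [0,1] (so ‖c‖ ≤ 1 − r), then 𝔹 ⊆ L + 2(1 − r)𝔹. -/
open Metric Set Pointwise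

noncomputable section

theorem stmt12 {n : ℕ} (hn : 2 ≤ n) (L : Set (E n)) (c : E n) (r : ℝ)
    (hr0 : 0 ≤ r) (hr1 : r ≤ 1)
    (h1 : closedBall c r ⊆ L) (h2 : L ⊆ closedBall (0 : E n) 1) :
    closedBall (0 : E n) 1 ⊆ L + closedBall (0 : E n) (2 * (1 - r)) := by
  -- First: ‖c‖ ≤ 1 - r
  have hc : ‖c‖ ≤ 1 - r := by
    rcases eq_or_ne c 0 with h | h
    · simp [h]; linarith
    · have hcpos : 0 < ‖c‖ := norm_pos_iff.mpr h
      set y := c + (r / ‖c‖) • c with hy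
      have hymem : y ∈ closedBall c r := by
        simp only [hy, mem_closedBall, dist_eq_norm, add_sub_cancel_left, norm_smul,
          Real.norm_eq_abs, abs_div, abs_of_nonneg hr0, abs_of_pos hcpos]
        rw [div_mul_cancel₀ _ (ne_of_gt hcpos)]
      have hyL : y ∈ closedBall (0 : E n) 1 := h2 (h1 hymem)
      have : ‖y‖ = ‖c‖ + r := by
        have : y = (1 + r / ‖c‖) • c := by
          rw [hy, add_smul, one_smul]
        rw [this, norm_smul, Real.norm_eq_abs,
          abs_of_pos (by positivity : (0:ℝ) < 1 + r / ‖c‖)]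
        field_simp
      have := mem_closedBall.mp hyL
      rw [dist_zero_right] at this
      linarith [this, ‹‖y‖ = ‖c‖ + r›]
  intro x hx
  have hx1 : ‖x‖ ≤ 1 := by rwa [mem_closedBall, dist_zero_right] at hx
  rcases le_or_gt (dist x c) r with hle | hlt
  · -- x is already in L
    refine ⟨x, h1 (mem_closedBall.mpr hle), 0, ?_, add_zero x⟩
    simp only [mem_closedBall, dist_zero_right, norm_zero]
    linarith
  · set d := ‖x - c‖ with hd
    have hdpos : 0 < d := by rw [dist_eq_norm] at hlt; linarith
    have hrd : r / d ≤ 1 := by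
      rw [div_le_one hdpos]
      rw [dist_eq_norm] at hlt
      linarith
    refine ⟨c + (r / d) • (x - c), h1 ?_, (1 - r / d) • (x - c), ?_, ?_⟩
    · simp only [mem_closedBall, dist_eq_norm, add_sub_cancel_left, norm_smul,
        Real.norm_eq_abs, abs_div, abs_of_nonneg hr0, abs_of_pos hdpos, ← hd]
      rw [div_mul_cancel₀ _ (ne_of_gt hdpos)]
    · simp only [mem_closedBall, dist_zero_right, norm_smul, Real.norm_eq_abs,
        abs_of_nonneg (by linarith : (0:ℝ) ≤ 1 - r / d), ← hd]
      have hdle : d ≤ 2 - r := by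
        calc d ≤ ‖x‖ + ‖c‖ := norm_sub_le x c
        _ ≤ 1 + (1 - r) := add_le_add hx1 hc
        _ = 2 - r := by ring
      have : (1 - r / d) * d = d - r := by field_simp
      rw [this]; linarith
    · module
end
end

section
/- Let K be a compact convex subset of 𝔹 ⊂ ℝⁿ with circumradius 1 and diameter D(K) < √(2n/(n−1)). Then K is full-dimensional (dim K = n) and 𝔹 ⊆ K + (1 − √(1 − ((n−1)/(2n))·D(K)²))·𝔹. -/
/-!
The centre `0` of the circumball lies in the convex hull of the touching points `K ∩ 𝕊`. Given a
unit vector `b`, the ray `ℝ≥0 • b` leaves the simplex spanned by finitely many touching points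
through a face with at most `n` vertices. By Jung's inequality, the centre `c` of the smallest ball
enclosing that face satisfies `⟪c, x⟫ ≥ 1 - w` on the face, where `w = (n-1)/(2n) D(K)²`, and then
the exit point or `c` reaches height `√(1 - w)` in direction `b`. This lower bound on the support
function of `K` gives `𝔹 ⊆ K + (1 - √(1 - w))𝔹` by separation, and, being positive in the
directions `±u`, it rules out `K` lying in a hyperplane `u⊥ + a`.
-/

open Metric Set Pointwise

noncomputable section

open Filter Topology RealInnerProductSpace
open scoped Finset

section ConvexHull

variable {V : Type*} [NormedAddCommGroup V] [NormedSpace ℝ V]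

theorem exists_nonneg_smul_mem_notMem_interior {C : Set V} (hC : IsCompact C) (h0 : (0 : V) ∈ C)
    {b : V} (hb : b ≠ 0) : ∃ t : ℝ, 0 ≤ t ∧ t • b ∈ C ∧ t • b ∉ interior C := by
  have hT : IsCompact ((· • b) ⁻¹' C : Set ℝ) :=
    (isClosedEmbedding_smul_left hb).isCompact_preimage hC
  obtain ⟨t, ht, hmax⟩ := hT.exists_isGreatest ⟨0, by simpa using h0⟩
  refine ⟨t, hmax (by simpa using h0), ht, fun hint => ?_⟩
  have hnear : ∀ᶠ s in 𝓝[>] t, s • b ∈ interior C :=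
    (((continuous_id.smul continuous_const).tendsto t).eventually
      (isOpen_interior.mem_nhds hint)).filter_mono nhdsWithin_le_nhds
  obtain ⟨s, hs, hts⟩ := (hnear.and self_mem_nhdsWithin).exists
  exact (hmax (show s • b ∈ C from interior_subset hs)).not_gt hts

variable [FiniteDimensional ℝ V]

theorem isCompact_convexHull {s : Set V} (hs : IsCompact s) : IsCompact (convexHull ℝ s) := by
  classical
  have hcover : convexHull ℝ s = ⋃ k : Fin (Module.finrank ℝ V + 2),
      (fun p : (Fin k → ℝ) × (Fin k → V) => ∑ i, p.1 i • p.2 i) ''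
        (stdSimplex ℝ (Fin k) ×ˢ univ.pi fun _ => s) := by
    refine Subset.antisymm (fun x hx => ?_) ?_
    · obtain ⟨ι, _, z, w, hzs, hz, hw0, hw1, rfl⟩ := eq_pos_convex_span_of_mem_convexHull hx
      have hcard : Fintype.card ι < Module.finrank ℝ V + 2 :=
        Nat.lt_succ_of_le <|
          hz.card_le_finrank_succ.trans (Nat.succ_le_succ (Submodule.finrank_le _))
      let e := Fintype.equivFin ι
      refine mem_iUnion.2 ⟨⟨_, hcard⟩, (w ∘ e.symm, z ∘ e.symm),
        ⟨⟨fun i => (hw0 _).le, (e.symm.sum_comp w).trans hw1⟩, fun i _ => hzs (mem_range_self _)⟩,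
        e.symm.sum_comp fun i => w i • z i⟩
    · simp only [iUnion_subset_iff, image_subset_iff]
      rintro k ⟨w, z⟩ ⟨hw, hz⟩
      exact (convex_convexHull ℝ s).sum_mem (fun i _ => hw.1 i) hw.2
        fun i _ => subset_convexHull ℝ s (hz i (mem_univ i))
  rw [hcover]
  exact isCompact_iUnion fun k =>
    ((isCompact_stdSimplex ℝ (Fin k)).prod (isCompact_univ_pi fun _ => hs)).image (by fun_prop)

theorem exists_finset_card_le_finrank_of_mem_convexHull_of_notMem_interior {s : Set V} {x : V}
    (hx : x ∈ convexHull ℝ s) (hxi : x ∉ interior (convexHull ℝ s)) :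
    ∃ F : Finset V, ↑F ⊆ s ∧ F.card ≤ Module.finrank ℝ V ∧ x ∈ convexHull ℝ ↑F := by
  classical
  obtain ⟨ι, _, z, w, hzs, hz, hw0, hw1, rfl⟩ := eq_pos_convex_span_of_mem_convexHull hx
  have hmem : ∑ i, w i • z i ∈ convexHull ℝ (range z) :=
    (convex_convexHull ℝ _).sum_mem (fun i _ => (hw0 i).le) hw1
      fun i _ => subset_convexHull ℝ _ (mem_range_self i)
  refine ⟨Finset.univ.image z, by simpa using hzs, ?_, by simpa using hmem⟩
  refine Finset.card_image_le.trans (not_lt.1 fun hlt => hxi ?_)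
  have htop : affineSpan ℝ (range z) = ⊤ :=
    hz.affineSpan_eq_top_iff_card_eq_finrank_add_one.2 <| le_antisymm
      (hz.card_le_finrank_succ.trans (Nat.succ_le_succ (Submodule.finrank_le _))) hlt
  let b : AffineBasis ι ℝ V := ⟨z, hz, htop⟩
  refine interior_mono (convexHull_mono hzs) ?_
  change _ ∈ interior (convexHull ℝ (range b))
  rw [b.interior_convexHull]
  intro i
  rw [← Finset.univ.affineCombination_eq_linear_combination z w hw1]
  change 0 < b.coord i (Finset.univ.affineCombination ℝ b w)
  rw [b.coord_apply_combination_of_mem (Finset.mem_univ i) hw1]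
  exact hw0 i

end ConvexHull

section InnerProduct

variable {V : Type*} [NormedAddCommGroup V] [InnerProductSpace ℝ V]

theorem sum_mul_dist_sq_eq_add {T : Finset V} {ν : V → ℝ} {c : V} (hν1 : ∑ q ∈ T, ν q = 1)
    (hc : ∑ q ∈ T, ν q • q = c) (y : V) :
    ∑ q ∈ T, ν q * dist q y ^ 2 = ∑ q ∈ T, ν q * dist q c ^ 2 + dist c y ^ 2 := by
  have hbalance : ∑ q ∈ T, ν q • (q - c) = 0 := by
    simp only [smul_sub, Finset.sum_sub_distrib, ← Finset.sum_smul, hν1, hc, one_smul, sub_self]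
  calc ∑ q ∈ T, ν q * dist q y ^ 2
      = ∑ q ∈ T, (ν q * dist q c ^ 2 + 2 * ⟪ν q • (q - c), c - y⟫ + ν q * dist c y ^ 2) := by
        refine Finset.sum_congr rfl fun q _ => ?_
        rw [dist_eq_norm, dist_eq_norm, dist_eq_norm, ← sub_add_sub_cancel q c y,
          norm_add_sq_real, real_inner_smul_left]
        ring
    _ = ∑ q ∈ T, ν q * dist q c ^ 2 + dist c y ^ 2 := by
        rw [Finset.sum_add_distrib, Finset.sum_add_distrib, ← Finset.mul_sum, ← sum_inner,
          hbalance, inner_zero_left, ← Finset.sum_mul, hν1]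
        ring

/-- Jung's inequality. -/
theorem sq_le_of_mem_convexHull_of_forall_dist_eq {T : Finset V} {c : V} {ρ D : ℝ} {N : ℕ}
    (hc : c ∈ convexHull ℝ (T : Set V)) (hρ : ∀ q ∈ T, dist q c = ρ)
    (hD : ∀ p ∈ T, ∀ q ∈ T, dist p q ≤ D) (hN : #T ≤ N) :
    ρ ^ 2 ≤ ((N : ℝ) - 1) / (2 * N) * D ^ 2 := by
  classical
  obtain ⟨ν, hν0, hν1, hνc⟩ := Finset.mem_convexHull'.1 hc
  have hvertex : ∀ j ∈ T, 2 * ρ ^ 2 ≤ (1 - ν j) * D ^ 2 := by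
    intro j hj
    calc 2 * ρ ^ 2 = ∑ q ∈ T, ν q * dist q j ^ 2 := by
          rw [sum_mul_dist_sq_eq_add hν1 hνc, Finset.sum_congr rfl fun q hq => by rw [hρ q hq],
            ← Finset.sum_mul, hν1, dist_comm, hρ j hj]
          ring
      _ = ∑ q ∈ T.erase j, ν q * dist q j ^ 2 := (Finset.sum_erase _ (by simp)).symm
      _ ≤ ∑ q ∈ T.erase j, ν q * D ^ 2 := Finset.sum_le_sum fun q hq =>
          mul_le_mul_of_nonneg_left
            (pow_le_pow_left₀ dist_nonneg (hD q (Finset.mem_of_mem_erase hq) j hj) 2)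
            (hν0 q (Finset.mem_of_mem_erase hq))
      _ = (1 - ν j) * D ^ 2 := by rw [← Finset.sum_mul, Finset.sum_erase_eq_sub hj, hν1]
  have hsum : 2 * ρ ^ 2 ≤ (1 - ∑ j ∈ T, ν j ^ 2) * D ^ 2 :=
    calc 2 * ρ ^ 2 = ∑ j ∈ T, ν j * (2 * ρ ^ 2) := by rw [← Finset.sum_mul, hν1, one_mul]
      _ ≤ ∑ j ∈ T, ν j * ((1 - ν j) * D ^ 2) :=
          Finset.sum_le_sum fun j hj => mul_le_mul_of_nonneg_left (hvertex j hj) (hν0 j hj)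
      _ = (∑ j ∈ T, ν j - ∑ j ∈ T, ν j ^ 2) * D ^ 2 := by
          rw [sub_mul, Finset.sum_mul, Finset.sum_mul, ← Finset.sum_sub_distrib]
          exact Finset.sum_congr rfl fun j _ => by ring
      _ = (1 - ∑ j ∈ T, ν j ^ 2) * D ^ 2 := by rw [hν1]
  have hcs : 1 ≤ (N : ℝ) * ∑ j ∈ T, ν j ^ 2 := by
    have := sq_sum_le_card_mul_sum_sq (s := T) (f := ν)
    rw [hν1, one_pow] at this
    exact this.trans (mul_le_mul_of_nonneg_right (by exact_mod_cast hN)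
      (Finset.sum_nonneg fun j _ => sq_nonneg _))
  have hNpos : (0 : ℝ) < N := by
    rcases Nat.eq_zero_or_pos N with h | h
    · norm_num [h] at hcs
    · exact_mod_cast h
  rw [div_mul_eq_mul_div, le_div_iff₀ (by positivity)]
  nlinarith [mul_le_mul_of_nonneg_left hsum hNpos.le, mul_le_mul_of_nonneg_right hcs (sq_nonneg D)]

theorem closedBall_subset_add_closedBall [CompleteSpace V] {K : Set V} (hK : IsCompact K)
    (hKc : Convex ℝ K) (hne : K.Nonempty) {ε : ℝ} (hε : 0 ≤ ε)
    (h : ∀ b : V, ‖b‖ = 1 → ∃ x ∈ K, 1 - ε ≤ ⟪b, x⟫) :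
    closedBall (0 : V) 1 ⊆ K + closedBall 0 ε := by
  intro z hz
  by_contra hzC
  obtain ⟨f, u, hfz, hfC⟩ := geometric_hahn_banach_point_closed
    (hKc.add (convex_closedBall 0 ε)) (isClosed_closedBall.add_left_of_isCompact hK) hzC
  set v := (InnerProductSpace.toDual ℝ V).symm f
  have hv : ∀ x, ⟪v, x⟫ = f x := fun x => InnerProductSpace.toDual_symm_apply
  have hv0 : v ≠ 0 := by
    rintro hv0
    obtain ⟨x, hx⟩ := hne
    have hfx := hfC (x + 0) (add_mem_add hx (mem_closedBall_self hε))
    rw [← hv, hv0, inner_zero_left] at hfx hfz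
    linarith
  set b := -(‖v‖⁻¹ • v)
  have hb : ‖b‖ = 1 := by simp [b, norm_smul, hv0]
  have hbf : ∀ x, ⟪b, x⟫ = -(‖v‖⁻¹ * f x) := fun x => by
    rw [inner_neg_left, real_inner_smul_left, hv]
  obtain ⟨x, hxK, hx⟩ := h b hb
  have hfar := hfC (x + ε • b) (add_mem_add hxK (by
    rw [mem_closedBall_zero_iff, norm_smul, hb, Real.norm_of_nonneg hε, mul_one]))
  have hlo : 1 ≤ ⟪b, x + ε • b⟫ := by
    rw [inner_add_right, real_inner_smul_right, real_inner_self_eq_norm_sq, hb]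
    linarith
  have hhi : ⟪b, z⟫ ≤ 1 := (real_inner_le_norm b z).trans (by
    rw [hb, one_mul]; exact mem_closedBall_zero_iff.1 hz)
  rw [hbf] at hlo hhi
  have hpos : 0 < ‖v‖⁻¹ := inv_pos.2 (norm_pos_iff.2 hv0)
  nlinarith

theorem affineSpan_eq_top_of_forall_exists_inner_pos [FiniteDimensional ℝ V] {K : Set V}
    (hne : K.Nonempty) (h : ∀ b : V, ‖b‖ = 1 → ∃ x ∈ K, 0 < ⟪b, x⟫) :
    affineSpan ℝ K = ⊤ := by
  obtain ⟨x₀, hx₀⟩ := hne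
  by_contra htop
  have hperp : (affineSpan ℝ K).directionᗮ ≠ ⊥ := by
    rwa [Ne, Submodule.orthogonal_eq_bot_iff,
      AffineSubspace.direction_eq_top_iff_of_nonempty ⟨x₀, subset_affineSpan ℝ K hx₀⟩]
  obtain ⟨v, hv, hv0⟩ := Submodule.exists_mem_ne_zero_of_ne_bot hperp
  set u := ‖v‖⁻¹ • v
  have hconst : ∀ x ∈ K, ⟪u, x⟫ = ⟪u, x₀⟫ := fun x hx => by
    have := Submodule.inner_right_of_mem_orthogonal
      (AffineSubspace.vsub_mem_direction (subset_affineSpan ℝ K hx) (subset_affineSpan ℝ K hx₀))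
      (Submodule.smul_mem _ ‖v‖⁻¹ hv)
    rw [vsub_eq_sub, inner_sub_left] at this
    rw [real_inner_comm, real_inner_comm x₀]
    linarith
  have hu : ‖u‖ = 1 := by simp [u, norm_smul, hv0]
  obtain ⟨x, hx, hpos⟩ := h u hu
  obtain ⟨y, hy, hneg⟩ := h (-u) (by rwa [norm_neg])
  rw [hconst x hx] at hpos
  rw [inner_neg_left, hconst y hy] at hneg
  linarith

end InnerProduct

section Circumball

variable {n : ℕ} {K : Set (E n)} {c : E n} {r : ℝ}

theorem IsCircumball.nonempty (h : IsCircumball K c r) : K.Nonempty := by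
  by_contra hempty
  rw [not_nonempty_iff_eq_empty] at hempty
  linarith [h.2 c (r - 1) (by simp [hempty])]

theorem IsCompact.exists_isCircumball (hK : IsCompact K) (hne : K.Nonempty) :
    ∃ c r, IsCircumball K c r := by
  obtain ⟨q, hq⟩ := hne
  set R := diam K
  set S : Set (E n × ℝ) := {p | K ⊆ closedBall p.1 p.2 ∧ p.2 ≤ R}
  have hS : IsCompact S := by
    refine ((isCompact_closedBall q R).prod (isCompact_Icc (a := 0) (b := R))).of_isClosed_subset
      ?_ fun p hp => ?_
    · have : S = (⋂ x ∈ K, {p : E n × ℝ | dist x p.1 ≤ p.2}) ∩ {p | p.2 ≤ R} := by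
        ext p; simp [S, subset_def]
      rw [this]
      exact (isClosed_biInter fun x _ => isClosed_le (by fun_prop) continuous_snd).inter
        (isClosed_le continuous_snd continuous_const)
    · have hqp : dist q p.1 ≤ p.2 := hp.1 hq
      exact ⟨mem_closedBall_comm.1 (hqp.trans hp.2), dist_nonneg.trans hqp, hp.2⟩
  have hqR : (q, R) ∈ S := ⟨fun x hx => dist_le_diam_of_mem hK.isBounded hx hq, le_rfl⟩
  obtain ⟨⟨c, r⟩, ⟨hKc, -⟩, hmin⟩ := hS.exists_isMinOn ⟨_, hqR⟩ continuous_snd.continuousOn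
  refine ⟨c, r, hKc, fun c' r' h => ?_⟩
  rcases le_or_gt r' R with h' | h'
  · exact hmin (show (c', r') ∈ S from ⟨h, h'⟩)
  · exact (hmin hqR).trans h'.le

/-- If the centre were not in the hull of the touching points, moving it slightly towards them
would shrink the enclosing ball. -/
theorem IsCircumball.mem_convexHull_inter_sphere (h : IsCircumball K c r) (hK : IsCompact K) :
    c ∈ convexHull ℝ (K ∩ sphere c r) := by
  by_contra hc
  obtain ⟨f, u, hfc, hfu⟩ := geometric_hahn_banach_point_closed (convex_convexHull ℝ _)
    (isCompact_convexHull (hK.inter_right isClosed_sphere)).isClosed hc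
  set v := (InnerProductSpace.toDual ℝ (E n)).symm f
  have hv : ∀ x, ⟪v, x⟫ = f x := fun x => InnerProductSpace.toDual_symm_apply
  obtain ⟨M, hMr, hM⟩ : ∃ M < r, K ∩ {x | f x ≤ u} ⊆ ball c M := by
    refine exists_lt_subset_ball
      (hK.inter_right (isClosed_le f.continuous continuous_const)).isClosed fun x ⟨hxK, hxu⟩ => ?_
    exact (mem_closedBall.1 (h.1 hxK)).lt_of_ne fun hxr =>
      (hfu x (subset_convexHull ℝ _ ⟨hxK, mem_sphere.2 hxr⟩)).not_ge hxu
  have hlim : ∀ a : ℝ, Tendsto (fun t : ℝ => t * a) (𝓝[>] 0) (𝓝 0) := fun a => by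
    simpa using ((continuous_mul_const a).tendsto 0).mono_left nhdsWithin_le_nhds
  obtain ⟨t, htM, htu, ht0⟩ := (((hlim ‖v‖).eventually (gt_mem_nhds (sub_pos.2 hMr))).and
    (((hlim (‖v‖ ^ 2)).eventually (gt_mem_nhds (by linarith : 0 < 2 * (u - f c)))).and
      self_mem_nhdsWithin)).exists
  have ht0 : 0 < t := ht0
  have hKt : K ⊆ ball (c + t • v) r := by
    intro x hxK
    have hxr : dist x c ≤ r := h.1 hxK
    rcases le_or_gt (f x) u with hxu | hxu
    · calc dist x (c + t • v) ≤ dist x c + dist c (c + t • v) := dist_triangle _ _ _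
        _ < M + t * ‖v‖ := by
            rw [dist_self_add_right, norm_smul, Real.norm_of_nonneg ht0.le]
            linarith [mem_ball.1 (hM ⟨hxK, hxu⟩)]
        _ < r := by linarith
    · have hsq : dist x (c + t • v) ^ 2
          = dist x c ^ 2 - 2 * t * (f x - f c) + t * (t * ‖v‖ ^ 2) := by
        rw [dist_eq_norm, dist_eq_norm, ← sub_sub, norm_sub_sq_real, real_inner_smul_right,
          real_inner_comm, inner_sub_right, hv, hv, norm_smul, Real.norm_of_nonneg ht0.le]
        ring
      have : dist x (c + t • v) ^ 2 < r ^ 2 := by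
        rw [hsq]
        nlinarith [pow_le_pow_left₀ dist_nonneg hxr 2]
      exact mem_ball.2 (lt_of_pow_lt_pow_left₀ 2 (dist_nonneg.trans hxr) this)
  obtain ⟨r', hr', hKr'⟩ := exists_lt_subset_ball hK.isClosed hKt
  exact (h.2 _ _ (hKr'.trans ball_subset_closedBall)).not_gt hr'

/-- The centre `c` of the smallest ball enclosing `F` has `‖c‖² = 1 - ρ²`, and `F` lies in the
half-space `⟪c, x⟫ ≥ 1 - ρ²`; Jung's inequality bounds `ρ`. -/
theorem exists_mem_convexHull_forall_le_inner {F : Finset (E n)} (hne : F.Nonempty)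
    (hF : ∀ q ∈ F, ‖q‖ = 1) {D : ℝ} (hD : ∀ p ∈ F, ∀ q ∈ F, dist p q ≤ D) {N : ℕ} (hN : #F ≤ N) :
    ∃ c ∈ convexHull ℝ (F : Set (E n)), ∀ x ∈ convexHull ℝ (F : Set (E n)),
      1 - ((N : ℝ) - 1) / (2 * N) * D ^ 2 ≤ ⟪c, x⟫ := by
  classical
  obtain ⟨c, ρ, hcirc⟩ := F.finite_toSet.isCompact.exists_isCircumball hne.to_set
  set T := F.filter fun q => dist q c = ρ
  have hTF : T ⊆ F := Finset.filter_subset _ _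
  have hcT : c ∈ convexHull ℝ (T : Set (E n)) := by
    convert hcirc.mem_convexHull_inter_sphere F.finite_toSet.isCompact using 2
    ext q
    simp [T, dist_eq_norm]
  have hρ : ρ ^ 2 ≤ ((N : ℝ) - 1) / (2 * N) * D ^ 2 :=
    sq_le_of_mem_convexHull_of_forall_dist_eq hcT (fun q hq => (Finset.mem_filter.1 hq).2)
      (fun p hp q hq => hD p (hTF hp) q (hTF hq)) ((Finset.card_le_card hTF).trans hN)
  have hexpand : ∀ q ∈ F, dist q c ^ 2 = 1 - 2 * ⟪c, q⟫ + ‖c‖ ^ 2 := fun q hq => by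
    rw [dist_eq_norm, norm_sub_sq_real, hF q hq, real_inner_comm, one_pow]
  have hlin : IsLinearMap ℝ fun x : E n => ⟪c, x⟫ :=
    ⟨inner_add_right c, fun a x => real_inner_smul_right c x a⟩
  have hc : ‖c‖ ^ 2 = 1 - ρ ^ 2 := by
    have hplane : c ∈ {x | ⟪c, x⟫ = (1 + ‖c‖ ^ 2 - ρ ^ 2) / 2} := by
      refine convexHull_min (fun q hq => ?_) (convex_hyperplane hlin _) hcT
      have := hexpand q (hTF hq)
      rw [(Finset.mem_filter.1 hq).2] at this
      simp only [mem_ofPred_eq]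
      linarith
    rw [mem_ofPred_eq, real_inner_self_eq_norm_sq] at hplane
    linarith
  refine ⟨c, convexHull_mono hTF hcT, fun x hx => ?_⟩
  have hhalf : x ∈ {x | 1 - ρ ^ 2 ≤ ⟪c, x⟫} := by
    refine convexHull_min (fun q hq => ?_) (convex_halfSpace_ge hlin _) hx
    have := hexpand q hq
    have := pow_le_pow_left₀ dist_nonneg (mem_closedBall.1 (hcirc.1 hq)) 2
    simp only [mem_ofPred_eq]
    linarith
  exact le_trans (by linarith) hhalf

theorem IsCircumball.exists_sqrt_le_inner (hcb : IsCircumball K 0 1) (hK : IsCompact K)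
    (hKc : Convex ℝ K) (hw : ((n : ℝ) - 1) / (2 * n) * diam K ^ 2 < 1) {b : E n} (hb : ‖b‖ = 1) :
    ∃ x ∈ K, √(1 - ((n : ℝ) - 1) / (2 * n) * diam K ^ 2) ≤ ⟪b, x⟫ := by
  set w := ((n : ℝ) - 1) / (2 * n) * diam K ^ 2
  obtain ⟨s, hsP, h0s⟩ :
      ∃ s : Finset (E n), ↑s ⊆ K ∩ sphere 0 1 ∧ (0 : E n) ∈ convexHull ℝ ↑s := by
    have h0 := hcb.mem_convexHull_inter_sphere hK
    rw [convexHull_eq_union_convexHull_finite_subsets] at h0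
    simpa only [mem_iUnion, exists_prop] using h0
  obtain ⟨t, ht0, hts, htI⟩ := exists_nonneg_smul_mem_notMem_interior
    (s.finite_toSet.isCompact_convexHull ℝ) h0s (b := b)
    (norm_ne_zero_iff.1 (by rw [hb]; exact one_ne_zero))
  obtain ⟨F, hFs, hFn, htF⟩ :=
    exists_finset_card_le_finrank_of_mem_convexHull_of_notMem_interior hts htI
  rw [finrank_euclideanSpace_fin] at hFn
  have hFK : (F : Set (E n)) ⊆ K := hFs.trans (hsP.trans inter_subset_left)
  obtain ⟨c, hcF, hc⟩ := exists_mem_convexHull_forall_le_inner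
    (Finset.coe_nonempty.1 (convexHull_nonempty_iff.1 ⟨_, htF⟩))
    (fun q hq => mem_sphere_zero_iff_norm.1 (hsP (hFs hq)).2)
    (fun p hp q hq => dist_le_diam_of_mem hK.isBounded (hFK hp) (hFK hq)) hFn
  have hct : 1 - w ≤ t * ⟪b, c⟫ := by
    have := hc _ htF
    rwa [real_inner_smul_right, real_inner_comm] at this
  -- `t * ⟪b, c⟫ ≥ 1 - w` forces `t = ⟪b, t • b⟫` or `⟪b, c⟫` up to `√(1 - w)`
  by_contra! hlow
  have htσ := hlow _ (convexHull_min hFK hKc htF)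
  have hcσ := hlow _ (convexHull_min hFK hKc hcF)
  rw [real_inner_smul_right, real_inner_self_eq_norm_sq, hb, one_pow, mul_one] at htσ
  have hσ := Real.sq_sqrt (sub_nonneg.2 hw.le)
  nlinarith [Real.sqrt_nonneg (1 - w)]

end Circumball

theorem mul_sq_lt_one_of_lt_sqrt {n : ℕ} (hn : 2 ≤ n) {D : ℝ} (hD0 : 0 ≤ D)
    (hD : D < √(2 * n / ((n : ℝ) - 1))) : ((n : ℝ) - 1) / (2 * n) * D ^ 2 < 1 := by
  have hn' : (2 : ℝ) ≤ n := by exact_mod_cast hn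
  have := (Real.lt_sqrt hD0).1 hD
  rw [div_mul_eq_mul_div, div_lt_one (by positivity)]
  rw [lt_div_iff₀ (by linarith)] at this
  linarith

theorem stmt13_general {n : ℕ} (hn : 2 ≤ n) (K : Set (E n)) (hK : IsCompact K) (hKc : Convex ℝ K)
    (hcb : IsCircumball K 0 1)
    (hD : Metric.diam K < Real.sqrt (2 * (n : ℝ) / ((n : ℝ) - 1))) :
    affineSpan ℝ K = ⊤ ∧
      closedBall (0 : E n) 1 ⊆
        K + closedBall (0 : E n)
          (1 - Real.sqrt (1 - (((n : ℝ) - 1) / (2 * (n : ℝ))) * (Metric.diam K) ^ 2)) := by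
  have hw := mul_sq_lt_one_of_lt_sqrt hn diam_nonneg hD
  have hsupp := fun b (hb : ‖b‖ = 1) => hcb.exists_sqrt_le_inner hK hKc hw hb
  refine ⟨affineSpan_eq_top_of_forall_exists_inner_pos hcb.nonempty fun b hb => ?_,
    closedBall_subset_add_closedBall hK hKc hcb.nonempty ?_ fun b hb => ?_⟩
  · obtain ⟨x, hxK, hx⟩ := hsupp b hb
    exact ⟨x, hxK, (Real.sqrt_pos.2 (sub_pos.2 hw)).trans_le hx⟩
  · have hn' : (1 : ℝ) ≤ n := by exact_mod_cast one_le_two.trans hn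
    rw [sub_nonneg, Real.sqrt_le_one, sub_le_self_iff]
    exact mul_nonneg (div_nonneg (by linarith) (by positivity)) (sq_nonneg _)
  · simpa only [sub_sub_cancel] using hsupp b hb

theorem stmt13 {n : ℕ} (hn : 2 ≤ n) (K : Set (E n)) (hK : IsCompact K) (hKc : Convex ℝ K)
    (hKB : K ⊆ closedBall 0 1) (hcb : IsCircumball K 0 1)
    (hD : Metric.diam K < Real.sqrt (2 * (n : ℝ) / ((n : ℝ) - 1))) :
    affineSpan ℝ K = ⊤ ∧
      closedBall (0 : E n) 1 ⊆
        K + closedBall (0 : E n)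
          (1 - Real.sqrt (1 - (((n : ℝ) - 1) / (2 * (n : ℝ))) * (Metric.diam K) ^ 2)) :=
  stmt13_general hn K hK hKc hcb hD
end
end

section
/- Let K, L ⊂ ℝⁿ be compact convex sets with circumball 𝔹 whose inradii satisfy r(K) ≥ 1 − ε and r(L) ≥ 1 − ε for some ε > 0. Then ⊙(K,L) ≤ √(1 + 4ε) + ε − 1, where ⊙(K,L) = inf{d_H(σK, L) : σ ∈ O(n)}. -/
open Metric Set

noncomputable section

lemma nonempty_of_circumball {n : ℕ} {A : Set (E n)} (h : IsCircumball A 0 1) : A.Nonempty := by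
  rcases A.eq_empty_or_nonempty with hA | hA
  · exfalso
    have := h.2 0 (-1) (by simp [hA])
    linarith
  · exact hA

lemma norm_add_le_of_ball_subset {n : ℕ} (hn : 2 ≤ n) {c : E n} {r : ℝ} (hr : 0 ≤ r)
    (h : closedBall c r ⊆ closedBall (0 : E n) 1) : ‖c‖ + r ≤ 1 := by
  by_cases hc : c = 0
  · set e : E n := EuclideanSpace.single (⟨0, by omega⟩ : Fin n) (1 : ℝ) with he
    have hne : ‖e‖ = 1 := by simp [he]
    have hmem : r • e ∈ closedBall c r := by
      simp only [mem_closedBall, hc, dist_zero_right, norm_smul, Real.norm_eq_abs,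
        abs_of_nonneg hr, hne, mul_one, le_refl]
    have := h hmem
    simp only [mem_closedBall, dist_zero_right, norm_smul, Real.norm_eq_abs,
      abs_of_nonneg hr, hne, mul_one] at this
    simp [hc, this]
  · have hcn : 0 < ‖c‖ := norm_pos_iff.mpr hc
    have hmem : c + (r / ‖c‖) • c ∈ closedBall c r := by
      rw [mem_closedBall, dist_eq_norm, add_sub_cancel_left, norm_smul, Real.norm_eq_abs,
        abs_of_nonneg (div_nonneg hr hcn.le), div_mul_cancel₀ _ hcn.ne']
    have h1 := h hmem
    rw [mem_closedBall, dist_zero_right,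
      show c + (r / ‖c‖) • c = (1 + r / ‖c‖) • c by rw [add_smul, one_smul], norm_smul,
      Real.norm_eq_abs, abs_of_nonneg (by positivity : (0:ℝ) ≤ 1 + r / ‖c‖)] at h1
    have : (1 + r / ‖c‖) * ‖c‖ = ‖c‖ + r := by field_simp
    linarith [this ▸ h1]

/-- If `L` contains a ball of radius `r > 0` and is contained in the unit ball, then every point
of the unit ball is within `2 - 2r` of `L`. -/
lemma exists_close_point {n : ℕ} (hn : 2 ≤ n) {L : Set (E n)} {c : E n} {r : ℝ} (hr : 0 < r)
    (hball : closedBall c r ⊆ L) (hL : L ⊆ closedBall (0 : E n) 1)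
    {x : E n} (hx : x ∈ closedBall (0 : E n) 1) :
    ∃ y ∈ L, dist x y ≤ 2 - 2 * r := by
  have hc1 : ‖c‖ + r ≤ 1 :=
    norm_add_le_of_ball_subset hn hr.le (hball.trans hL)
  have hr1 : r ≤ 1 := by linarith [norm_nonneg c]
  by_cases hxc : dist x c ≤ r
  · exact ⟨x, hball (mem_closedBall.mpr hxc), by simp; linarith⟩
  · push_neg at hxc
    have hd : 0 < dist x c := lt_trans hr hxc
    set s := r / dist x c with hs
    have hs1 : s ≤ 1 := div_le_one_of_le₀ hxc.le hd.le
    have hs0 : 0 ≤ s := div_nonneg hr.le hd.le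
    set y := c + s • (x - c) with hy
    have hymem : y ∈ closedBall c r := by
      rw [mem_closedBall, hy, dist_eq_norm, add_sub_cancel_left, norm_smul, Real.norm_eq_abs,
        abs_of_nonneg hs0, show ‖x - c‖ = dist x c from (dist_eq_norm x c).symm, hs,
        div_mul_cancel₀ _ hd.ne']
    refine ⟨y, hball hymem, ?_⟩
    have hxy : dist x y = dist x c - r := by
      have hsub : x - y = (1 - s) • (x - c) := by
        rw [hy, sub_smul, one_smul, smul_sub]
        abel
      rw [dist_eq_norm, hsub, norm_smul, Real.norm_eq_abs, abs_of_nonneg (by linarith),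
        show ‖x - c‖ = dist x c from (dist_eq_norm x c).symm, hs]
      field_simp
    have hxn : dist x c ≤ ‖x‖ + ‖c‖ := by
      rw [dist_eq_norm]; exact norm_sub_le x c
    have hx1 : ‖x‖ ≤ 1 := by simpa [dist_eq_norm] using hx
    rw [hxy]
    linarith

lemma hd_le_two {n : ℕ} {K L : Set (E n)} (hKne : K.Nonempty) (hLne : L.Nonempty)
    (hK1 : K ⊆ closedBall (0 : E n) 1) (hL1 : L ⊆ closedBall (0 : E n) 1) :
    hausdorffDist K L ≤ 2 := by
  apply hausdorffDist_le_of_mem_dist (by norm_num)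
  · intro x hx
    obtain ⟨y, hy⟩ := hLne
    refine ⟨y, hy, ?_⟩
    have h1 : ‖x‖ ≤ 1 := by simpa [dist_eq_norm] using hK1 hx
    have h2 : ‖y‖ ≤ 1 := by simpa [dist_eq_norm] using hL1 hy
    calc dist x y ≤ ‖x‖ + ‖y‖ := by rw [dist_eq_norm]; exact norm_sub_le x y
      _ ≤ 2 := by linarith
  · intro y hy
    obtain ⟨x, hx⟩ := hKne
    refine ⟨x, hx, ?_⟩
    have h1 : ‖x‖ ≤ 1 := by simpa [dist_eq_norm] using hK1 hx
    have h2 : ‖y‖ ≤ 1 := by simpa [dist_eq_norm] using hL1 hy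
    calc dist y x ≤ ‖y‖ + ‖x‖ := by rw [dist_eq_norm]; exact norm_sub_le y x
      _ ≤ 2 := by linarith

theorem stmt15 {n : ℕ} (hn : 2 ≤ n) (K L : Set (E n)) (hK : IsCompact K) (hKc : Convex ℝ K)
    (hL : IsCompact L) (hLc : Convex ℝ L)
    (hcbK : IsCircumball K 0 1) (hcbL : IsCircumball L 0 1)
    (ε : ℝ) (hε : 0 < ε) (hrK : 1 - ε ≤ inradius K) (hrL : 1 - ε ≤ inradius L) :
    (⨅ σ : E n ≃ₗᵢ[ℝ] E n, Metric.hausdorffDist (⇑σ '' K) L) ≤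
      Real.sqrt (1 + 4 * ε) + ε - 1 := by
  have hKne := nonempty_of_circumball hcbK
  have hLne := nonempty_of_circumball hcbL
  have hK1 : K ⊆ closedBall (0 : E n) 1 := hcbK.1
  have hL1 : L ⊆ closedBall (0 : E n) 1 := hcbL.1
  have h2 : hausdorffDist K L ≤ 2 := hd_le_two hKne hLne hK1 hL1
  -- the infimum is at most the value at the identity
  have hinf : (⨅ σ : E n ≃ₗᵢ[ℝ] E n, Metric.hausdorffDist (⇑σ '' K) L) ≤
      hausdorffDist K L := by
    have := ciInf_le (f := fun σ : E n ≃ₗᵢ[ℝ] E n => Metric.hausdorffDist (⇑σ '' K) L)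
      ⟨0, fun x ⟨σ, hσ⟩ => hσ ▸ hausdorffDist_nonneg⟩ (LinearIsometryEquiv.refl ℝ (E n))
    simpa only [LinearIsometryEquiv.coe_refl, Set.image_id] using this
  refine hinf.trans ?_
  by_cases hε1 : 1 ≤ ε
  · -- RHS ≥ 2
    have h5 : (2 : ℝ) ≤ Real.sqrt (1 + 4 * ε) := by
      rw [show (2 : ℝ) = Real.sqrt 4 by
        rw [show (4 : ℝ) = 2 ^ 2 by norm_num, Real.sqrt_sq (by norm_num)]]
      exact Real.sqrt_le_sqrt (by linarith)
    linarith
  · push_neg at hε1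
    -- show hausdorffDist K L ≤ 2ε
    have hdist : hausdorffDist K L ≤ 2 * ε := by
      refine le_of_forall_pos_le_add fun δ hδ => ?_
      by_cases hδ1 : 1 - ε ≤ δ / 2
      · linarith
      · push_neg at hδ1
        -- get balls of radius > 1 - ε - δ/2 > 0 in K and in L
        have hSne : ∀ (A : Set (E n)), {r : ℝ | ∃ c : E n, closedBall c r ⊆ A}.Nonempty :=
          fun A => ⟨-1, 0, by rw [closedBall_eq_empty.mpr (by norm_num : (-1:ℝ) < 0)]; exact Set.empty_subset A⟩
        have hballK : ∃ rK > 1 - ε - δ / 2, ∃ c : E n, closedBall c rK ⊆ K := by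
          obtain ⟨r, ⟨c, hc⟩, hr⟩ := exists_lt_of_lt_csSup (hSne K)
            (lt_of_lt_of_le (show (1:ℝ) - ε - δ / 2 < 1 - ε by linarith) hrK)
          exact ⟨r, hr, c, hc⟩
        have hballL : ∃ rL > 1 - ε - δ / 2, ∃ c : E n, closedBall c rL ⊆ L := by
          obtain ⟨r, ⟨c, hc⟩, hr⟩ := exists_lt_of_lt_csSup (hSne L)
            (lt_of_lt_of_le (show (1:ℝ) - ε - δ / 2 < 1 - ε by linarith) hrL)
          exact ⟨r, hr, c, hc⟩
        obtain ⟨rK, hrK', cK, hcK⟩ := hballK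
        obtain ⟨rL, hrL', cL, hcL⟩ := hballL
        set r := min rK rL with hrdef
        have hrpos : 0 < r := lt_min (by linarith) (by linarith)
        have hcK' : closedBall cK r ⊆ K :=
          (closedBall_subset_closedBall (min_le_left _ _)).trans hcK
        have hcL' : closedBall cL r ⊆ L :=
          (closedBall_subset_closedBall (min_le_right _ _)).trans hcL
        have hrbig : 1 - ε - δ / 2 < r := lt_min hrK' hrL'
        have hbound : hausdorffDist K L ≤ 2 - 2 * r := by
          apply hausdorffDist_le_of_mem_dist (by
            have h1 : ‖cL‖ + r ≤ 1 := norm_add_le_of_ball_subset hn hrpos.le (hcL'.trans hL1)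
            linarith [norm_nonneg cL])
          · exact fun x hx => exists_close_point hn hrpos hcL' hL1 (hK1 hx)
          · exact fun y hy => by
              obtain ⟨x, hxK, hxd⟩ := exists_close_point hn hrpos hcK' hK1 (hL1 hy)
              exact ⟨x, hxK, hxd⟩
        linarith
    -- show 2ε ≤ RHS
    have hsq : 1 + ε ≤ Real.sqrt (1 + 4 * ε) := by
      rw [show (1 : ℝ) + 4 * ε = (1 + ε) ^ 2 + (2 * ε - ε ^ 2) by ring]
      nlinarith [Real.sqrt_le_sqrt (show (1 + ε) ^ 2 ≤ (1 + ε) ^ 2 + (2 * ε - ε ^ 2) by nlinarith),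
        Real.sqrt_sq (show (0:ℝ) ≤ 1 + ε by linarith)]
    linarith
end
end

section
/- Let Tⁿ ⊂ ℝⁿ be a regular n-simplex with circumball 𝔹, and let K ⊂ ℝⁿ be a compact convex set with circumball 𝔹 such that Tⁿ ⊆ K, the diameter of K equals the diameter of Tⁿ, and the inradius of K equals the inradius of Tⁿ. Then K = Tⁿ. -/
open Metric Set

noncomputable section

/-- A regular `n`-simplex: the convex hull of `n+1` affinely independent points with all
pairwise distances equal. -/
def IsRegularSimplex {n : ℕ} (T : Set (E n)) : Prop :=
  ∃ p : Fin (n + 1) → E n, AffineIndependent ℝ p ∧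
    (∃ d : ℝ, ∀ i j, i ≠ j → dist (p i) (p j) = d) ∧
    T = convexHull ℝ (Set.range p)

open scoped RealInnerProductSpace

set_option maxHeartbeats 2000000

/-- From `x² ≤ y²` with both nonneg, conclude `x ≤ y`. -/
private lemma sq_le_imp {x y : ℝ} (hx : 0 ≤ x) (hy : 0 ≤ y) (h : x ^ 2 ≤ y ^ 2) : x ≤ y := by
  nlinarith

/-- Vertices of a regular simplex whose circumball is the unit ball centered at the origin:
they lie on the unit sphere, have pairwise inner products `-1/n`, and sum to zero. -/
private lemma vertex_facts {n : ℕ} (hn : 2 ≤ n) {p : Fin (n + 1) → E n} {d : ℝ}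
    (hd : ∀ i j, i ≠ j → dist (p i) (p j) = d)
    (hb1 : ∀ i, ‖p i‖ ≤ 1)
    (hmin : ∀ c' r', convexHull ℝ (Set.range p) ⊆ closedBall c' r' → (1:ℝ) ≤ r') :
    (∀ i, ‖p i‖ = 1) ∧ (∀ i j, i ≠ j → ⟪p i, p j⟫ = -(1 / (n : ℝ))) ∧ (∑ i, p i) = 0 := by
  have hN0 : (0:ℝ) < (n:ℝ) := by
    have : (0:ℕ) < n := by omega
    exact_mod_cast this
  have hn1 : ((n:ℝ)+1) ≠ 0 := by positivity
  have hip : ∀ i j, i ≠ j → 2 * ⟪p i, p j⟫ = ‖p i‖^2 + ‖p j‖^2 - d^2 := by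
    intro i j hij
    have h := hd i j hij
    rw [dist_eq_norm] at h
    have h2 : ‖p i - p j‖^2 = d^2 := by rw [h]
    rw [norm_sub_sq_real] at h2
    linarith
  set S : E n := ∑ i, p i with hS_def
  set A : ℝ := ∑ i, ‖p i‖^2 with hA_def
  have hsq_le : ∀ i, ‖p i‖^2 ≤ 1 := fun i => by nlinarith [hb1 i, norm_nonneg (p i)]
  have hAle : A ≤ (n:ℝ)+1 := by
    have h := Finset.sum_le_sum (fun i (_ : i ∈ Finset.univ) => hsq_le i)
    rw [Finset.sum_const, Finset.card_univ, Fintype.card_fin, nsmul_eq_mul, mul_one] at h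
    rw [hA_def]
    push_cast at h ⊢
    linarith
  have hipS : ∀ i, 2 * ⟪p i, S⟫ = ((n:ℝ)+1) * ‖p i‖^2 + A - (n:ℝ)*d^2 := by
    intro i
    have h0 : ⟪p i, S⟫ = ∑ j, ⟪p i, p j⟫ := by
      rw [hS_def, inner_sum]
    have hsplit : ∑ j, ⟪p i, p j⟫
        = ⟪p i, p i⟫ + ∑ j ∈ Finset.univ.erase i, ⟪p i, p j⟫ :=
      (Finset.add_sum_erase _ _ (Finset.mem_univ i)).symm
    have herase : ∑ j ∈ Finset.univ.erase i, (2 * ⟪p i, p j⟫)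
        = ∑ j ∈ Finset.univ.erase i, (‖p j‖^2 + (‖p i‖^2 - d^2)) := by
      refine Finset.sum_congr rfl fun j hj => ?_
      rw [hip i j (Ne.symm (Finset.ne_of_mem_erase hj))]
      ring
    have hesum : ∑ j ∈ Finset.univ.erase i, ‖p j‖^2 = A - ‖p i‖^2 := by
      have h : (∑ j ∈ Finset.univ.erase i, ‖p j‖^2) + ‖p i‖^2 = A :=
        Finset.sum_erase_add _ _ (Finset.mem_univ i)
      linarith
    have hcard : (Finset.univ.erase i).card = n := by
      rw [Finset.card_erase_of_mem (Finset.mem_univ i), Finset.card_univ, Fintype.card_fin]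
      omega
    have herase2 : ∑ j ∈ Finset.univ.erase i, (‖p j‖^2 + (‖p i‖^2 - d^2))
        = (A - ‖p i‖^2) + (n:ℝ) * (‖p i‖^2 - d^2) := by
      rw [Finset.sum_add_distrib, hesum, Finset.sum_const, hcard, nsmul_eq_mul]
    have hii : ⟪p i, p i⟫ = ‖p i‖^2 := real_inner_self_eq_norm_sq _
    have hmul : ∑ j ∈ Finset.univ.erase i, (2 * ⟪p i, p j⟫)
        = 2 * ∑ j ∈ Finset.univ.erase i, ⟪p i, p j⟫ := by
      rw [Finset.mul_sum]
    rw [h0, hsplit, hii]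
    have h5 := herase
    rw [hmul, herase2] at h5
    linarith
  have hSnorm : 2*‖S‖^2 = ((n:ℝ)+1) * (2*A - (n:ℝ)*d^2) := by
    have h1 : ‖S‖^2 = ∑ i, ⟪p i, S⟫ := by
      rw [← real_inner_self_eq_norm_sq]
      conv_lhs => rw [hS_def]
      rw [sum_inner]
    have h2 : ∑ i, (2 * ⟪p i, S⟫)
        = ∑ i : Fin (n+1), (((n:ℝ)+1) * ‖p i‖^2 + (A - (n:ℝ)*d^2)) := by
      refine Finset.sum_congr rfl fun i _ => ?_
      rw [hipS i]; ring
    have h3 : ∑ i : Fin (n+1), (((n:ℝ)+1) * ‖p i‖^2 + (A - (n:ℝ)*d^2))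
        = ((n:ℝ)+1) * A + ((n:ℝ)+1) * (A - (n:ℝ)*d^2) := by
      rw [Finset.sum_add_distrib, ← Finset.mul_sum, ← hA_def, Finset.sum_const,
        Finset.card_univ, Fintype.card_fin, nsmul_eq_mul]
      push_cast
      ring
    have h4 : ∑ i, (2 * ⟪p i, S⟫) = 2 * ∑ i, ⟪p i, S⟫ := by rw [Finset.mul_sum]
    rw [h4, h3] at h2
    nlinarith [h1, h2]
  set c' : E n := (((n:ℝ)+1)⁻¹) • S with hc'_def
  have hdist2 : ∀ i, 2*((n:ℝ)+1)^2*‖p i - c'‖^2 = ((n:ℝ)+1)*(n:ℝ)*d^2 := by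
    intro i
    have e1 : ⟪p i, c'⟫ = (((n:ℝ)+1))⁻¹ * ⟪p i, S⟫ := by
      rw [hc'_def, real_inner_smul_right]
    have hcn : ‖c'‖^2 = ((((n:ℝ)+1))⁻¹)^2 * ‖S‖^2 := by
      rw [hc'_def, norm_smul, mul_pow]
      congr 1
      rw [Real.norm_eq_abs, abs_of_pos (by positivity), sq]
    have e4 : ‖p i - c'‖^2 = ‖p i‖^2 - 2*((((n:ℝ)+1))⁻¹ * ⟪p i, S⟫)
        + ((((n:ℝ)+1))⁻¹)^2*‖S‖^2 := by
      rw [norm_sub_sq_real, e1, hcn]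
    have hinv : ((n:ℝ)+1) * ((n:ℝ)+1)⁻¹ = 1 := mul_inv_cancel₀ hn1
    have e4' : ((n:ℝ)+1)^2 * ‖p i - c'‖^2
        = ((n:ℝ)+1)^2 * ‖p i‖^2 - 2*((n:ℝ)+1) * ⟪p i, S⟫ + ‖S‖^2 := by
      linear_combination (((n:ℝ)+1)^2) * e4
        + (-(2*((n:ℝ)+1)*⟪p i, S⟫) + ‖S‖^2*(((n:ℝ)+1)*((n:ℝ)+1)⁻¹ + 1)) * hinv
    linear_combination 2*e4' - 2*((n:ℝ)+1)*(hipS i) + hSnorm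
  have hrad : ∀ i, ‖p i - c'‖ = ‖p 0 - c'‖ := by
    intro i
    have hsq : ‖p i - c'‖^2 = ‖p 0 - c'‖^2 := by
      have h1 := hdist2 i
      have h2 := hdist2 0
      have hpos : (0:ℝ) < 2*((n:ℝ)+1)^2 := by positivity
      nlinarith [h1, h2]
    exact le_antisymm (sq_le_imp (norm_nonneg _) (norm_nonneg _) (le_of_eq hsq))
      (sq_le_imp (norm_nonneg _) (norm_nonneg _) (le_of_eq hsq.symm))
  have hTball : convexHull ℝ (Set.range p) ⊆ closedBall c' ‖p 0 - c'‖ := by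
    apply convexHull_min _ (convex_closedBall c' ‖p 0 - c'‖)
    rintro y ⟨i, rfl⟩
    rw [mem_closedBall, dist_eq_norm]
    exact le_of_eq (hrad i)
  have hρ1 : 1 ≤ ‖p 0 - c'‖ := hmin c' ‖p 0 - c'‖ hTball
  have hρsq : 1 ≤ ‖p 0 - c'‖^2 := by nlinarith
  have hd2 : 2*((n:ℝ)+1) ≤ (n:ℝ)*d^2 := by nlinarith [hdist2 0]
  have hSnn : (0:ℝ) ≤ ‖S‖^2 := sq_nonneg _
  have hAge : (n:ℝ)+1 ≤ A := by nlinarith [hSnorm]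
  have hAeq : A = (n:ℝ)+1 := le_antisymm hAle hAge
  have hnormi : ∀ i, ‖p i‖ = 1 := by
    intro i
    by_contra hne
    have hlt : ‖p i‖^2 < 1 := lt_of_le_of_ne (hsq_le i) (by
      intro h
      exact hne (le_antisymm (hb1 i) (by nlinarith [norm_nonneg (p i)])))
    have hstrict : A < ∑ _i : Fin (n+1), (1:ℝ) :=
      Finset.sum_lt_sum (fun j _ => hsq_le j) ⟨i, Finset.mem_univ i, hlt⟩
    rw [Finset.sum_const, Finset.card_univ, Fintype.card_fin, nsmul_eq_mul, mul_one] at hstrict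
    push_cast at hstrict
    linarith [hAeq]
  have hd2eq : (n:ℝ)*d^2 = 2*((n:ℝ)+1) := by nlinarith [hSnorm]
  have hS0 : S = 0 := by
    have hsz : ‖S‖^2 = 0 := by nlinarith [hSnorm]
    have : ‖S‖ = 0 := by nlinarith [norm_nonneg S]
    exact norm_eq_zero.mp this
  refine ⟨hnormi, ?_, hS0⟩
  intro i j hij'
  have h := hip i j hij'
  rw [hnormi i, hnormi j] at h
  have h2 : (n:ℝ) * (2 * ⟪p i, p j⟫) = (n:ℝ)*((1:ℝ)^2+(1:ℝ)^2) - ((n:ℝ)*d^2) := by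
    rw [h]; ring
  rw [hd2eq] at h2
  rw [show -(1/(n:ℝ)) = (-1)/(n:ℝ) by ring, eq_div_iff (ne_of_gt hN0)]
  linarith

/-- The tight-frame identity for the vertices of a regular simplex inscribed in the unit
sphere centered at the origin. -/
private lemma frame_id {n : ℕ} (hn : 2 ≤ n) {p : Fin (n + 1) → E n}
    (hspan : Submodule.span ℝ (Set.range p) = ⊤)
    (hnorm : ∀ i, ‖p i‖ = 1)
    (hij : ∀ i j, i ≠ j → ⟪p i, p j⟫ = -(1 / (n : ℝ)))
    (hsum : (∑ i, p i) = 0) (u : E n) :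
    ∑ j, ⟪p j, u⟫ • p j = (((n : ℝ) + 1) / n) • u := by
  have hN0 : (0:ℝ) < (n:ℝ) := by
    have : (0:ℕ) < n := by omega
    exact_mod_cast this
  set F : E n →ₗ[ℝ] E n := ∑ j, ((innerSL ℝ (p j)).toLinearMap).smulRight (p j) with hF
  set G : E n →ₗ[ℝ] E n := (((n : ℝ) + 1) / n) • LinearMap.id with hG
  have key : F = G := by
    apply LinearMap.ext_on_range hspan
    intro i
    have hFi : F (p i) = ∑ j, ⟪p j, p i⟫ • p j := by
      simp [hF, LinearMap.sum_apply]
    have h2 : ∑ j ∈ Finset.univ.erase i, p j = - p i := by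
      have h := Finset.sum_erase_add Finset.univ p (Finset.mem_univ i)
      rw [hsum] at h
      linear_combination (norm := module) h
    have h1 : ∑ j ∈ Finset.univ.erase i, ⟪p j, p i⟫ • p j
        = (-(1/(n:ℝ))) • (- p i) := by
      rw [← h2, Finset.smul_sum]
      refine Finset.sum_congr rfl fun j hj => ?_
      rw [hij j i (Finset.ne_of_mem_erase hj)]
    have h3 : F (p i) = ⟪p i, p i⟫ • p i
        + ∑ j ∈ Finset.univ.erase i, ⟪p j, p i⟫ • p j := by
      rw [hFi, ← Finset.add_sum_erase _ _ (Finset.mem_univ i)]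
    have h4 : ⟪p i, p i⟫ = 1 := by
      rw [real_inner_self_eq_norm_sq, hnorm i]; norm_num
    have h5 : G (p i) = (((n : ℝ) + 1) / n) • p i := by simp [hG]
    rw [h3, h1, h4, h5]
    have hcoef : (1:ℝ) + (-(1/(n:ℝ))) * (-1) = ((n:ℝ)+1)/n := by field_simp
    have : (1:ℝ) • p i + (-(1/(n:ℝ))) • (- p i)
        = ((1:ℝ) + (-(1/(n:ℝ))) * (-1)) • p i := by module
    rw [this, hcoef]
  have hu := DFunLike.congr_fun key u
  simpa [hF, hG, LinearMap.sum_apply] using hu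

/-- Half-space characterization, direction: points satisfying all facet inequalities
belong to the simplex. -/
private lemma mem_of_halfspaces {n : ℕ} (hn : 2 ≤ n) {p : Fin (n + 1) → E n}
    (hframe : ∀ u : E n, ∑ j, ⟪p j, u⟫ • p j = (((n : ℝ) + 1) / n) • u)
    (hsum : (∑ i, p i) = 0) (x : E n)
    (hx : ∀ i, -(1/(n:ℝ)) ≤ ⟪p i, x⟫) :
    x ∈ convexHull ℝ (Set.range p) := by
  have hN0 : (0:ℝ) < (n:ℝ) := by
    have : (0:ℕ) < n := by omega
    exact_mod_cast this
  have hsin : ∑ i, ⟪p i, x⟫ = 0 := by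
    rw [← sum_inner, hsum, inner_zero_left]
  set w : Fin (n+1) → ℝ := fun i => ((n:ℝ)/((n:ℝ)+1)) * (⟪p i, x⟫ + 1/(n:ℝ)) with hw_def
  have hw0 : ∀ i ∈ Finset.univ, 0 ≤ w i := by
    intro i _
    have h1 : 0 ≤ ⟪p i, x⟫ + 1/(n:ℝ) := by linarith [hx i]
    have h2 : 0 ≤ (n:ℝ)/((n:ℝ)+1) := by positivity
    exact mul_nonneg h2 h1
  have hwsum : ∑ i, w i = 1 := by
    rw [hw_def]
    rw [← Finset.mul_sum, Finset.sum_add_distrib, hsin, Finset.sum_const,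
      Finset.card_univ, Fintype.card_fin, nsmul_eq_mul, zero_add]
    push_cast
    field_simp
  have hcm := Finset.centerMass_mem_convexHull Finset.univ hw0 (by rw [hwsum]; norm_num)
    (fun i _ => Set.mem_range_self (f := p) i)
  rw [Finset.centerMass_eq_of_sum_1 _ _ hwsum] at hcm
  have hxe : ∑ i, w i • p i = x := by
    have hterm : ∀ i, w i • p i
        = ((n:ℝ)/((n:ℝ)+1)) • (⟪p i, x⟫ • p i) + (((n:ℝ)/((n:ℝ)+1)) * (1/(n:ℝ))) • p i := by
      intro i
      have hwi : w i = (n:ℝ)/((n:ℝ)+1) * ⟪p i, x⟫ + (n:ℝ)/((n:ℝ)+1) * (1/(n:ℝ)) := by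
        simp only [hw_def]; ring
      rw [hwi, add_smul, ← smul_smul]
    rw [Finset.sum_congr rfl (fun i _ => hterm i), Finset.sum_add_distrib,
      ← Finset.smul_sum, ← Finset.smul_sum, hframe x, hsum, smul_zero, add_zero, smul_smul]
    have hco : ((n:ℝ)/((n:ℝ)+1)) * (((n:ℝ)+1)/(n:ℝ)) = 1 := by field_simp
    rw [hco, one_smul]
  rw [hxe] at hcm
  exact hcm

/-- Pure numerical fact used in case B of the support claim. -/
private lemma caseB_num {N a t s M η : ℝ} (hN2 : 2 ≤ N) (hη : 0 < η) (hηle : η ≤ 2)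
    (ht_def : t = η^2 / (160 * N^2)) (hs_def : s = t / (2*N))
    (hM_def : M = 1/N + s - t * a)
    (hA : -1 + η^2/8 < a) (hB : a < M) (haU : a ≤ 1) (haL : -1 ≤ a)
    (hG : (N+1)/N ≤ 2*a^2 + N*(N-1)*M^2 + 2*(N-1)*a*M) : False := by
  have hN0 : (0:ℝ) < N := by linarith
  have ht : 0 < t := by rw [ht_def]; positivity
  have hid : 2*a^2 + N*(N-1)*M^2 + 2*(N-1)*a*M - (N+1)/N
      = 2*(a+1)*(a-1/N) + (N-1)*(M - 1/N)*(N*M + 1 + 2*a) := by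
    field_simp
    ring
  have hMP : M - 1/N = t*(1/(2*N) - a) := by
    rw [hM_def, hs_def]
    field_simp
    ring
  rcases le_or_gt a (1/(2*N)) with hcc | hcc
  · -- subcase a ≤ 1/(2N)
    have hP0 : 0 ≤ M - 1/N := by
      rw [hMP]
      exact mul_nonneg ht.le (by linarith)
    have hP2 : M - 1/N ≤ 2*t := by
      rw [hMP]
      have h1 : 1/(2*N) - a ≤ 2 := by
        have : 1/(2*N) ≤ 1 := by
          rw [div_le_one (by linarith)]
          linarith
        linarith
      have h2 := mul_le_mul_of_nonneg_left h1 ht.le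
      linarith only [h2]
    have h2Nt : 2*N*t ≤ 1 := by
      rw [ht_def]
      rw [show 2*N*(η^2/(160*N^2)) = η^2/(80*N) by field_simp; ring]
      rw [div_le_one (by positivity)]
      nlinarith [hηle, hη.le]
    have hF5 : N*M + 1 + 2*a ≤ 5 := by
      have hMle : M ≤ 1/N + 2*t := by linarith
      have h1 : N*M ≤ N*(1/N + 2*t) :=
        mul_le_mul_of_nonneg_left hMle (by linarith)
      have h2 : N*(1/N) = 1 := by field_simp
      have h3 : 2*a ≤ 1 := by
        have : 1/(2*N) ≤ 1/2 := by
          apply div_le_div_of_nonneg_left (by norm_num) (by norm_num)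
          linarith
        linarith
      linarith only [h1, h2, h3, h2Nt]
    have hD2 : (N-1)*(M - 1/N)*(N*M + 1 + 2*a) ≤ (N-1)*(2*t)*5 := by
      rcases le_or_gt (N*M + 1 + 2*a) 0 with hF | hF
      · have hle0 : (N-1)*(M - 1/N)*(N*M + 1 + 2*a) ≤ 0 :=
          mul_nonpos_of_nonneg_of_nonpos (mul_nonneg (by linarith) hP0) hF
        have : (0:ℝ) ≤ (N-1)*(2*t)*5 :=
          mul_nonneg (mul_nonneg (by linarith) (by linarith)) (by norm_num)
        linarith
      · have hA0 : 0 ≤ (N-1)*(M-1/N) := mul_nonneg (by linarith) hP0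
        have hA1 : (N-1)*(M-1/N) ≤ (N-1)*(2*t) :=
          mul_le_mul_of_nonneg_left hP2 (by linarith)
        calc (N-1)*(M - 1/N)*(N*M + 1 + 2*a)
            ≤ (N-1)*(M-1/N)*5 := mul_le_mul_of_nonneg_left hF5 hA0
        _ ≤ (N-1)*(2*t)*5 := mul_le_mul_of_nonneg_right hA1 (by norm_num)
    have hD1 : 2*(a+1)*(a-1/N) ≤ -(η^2/8)*(1/N) := by
      have h1 : η^2/8 ≤ a + 1 := by linarith
      have h2 : a - 1/N ≤ -(1/(2*N)) := by
        have heq : 1/(2*N) - 1/N = -(1/(2*N)) := by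
          field_simp
          ring
        linarith
      have h3 : (0:ℝ) < 1/(2*N) := by positivity
      nlinarith [mul_le_mul_of_nonneg_left h2 (show (0:ℝ) ≤ a + 1 by linarith),
        mul_le_mul_of_nonneg_right h1 h3.le]
    have hfin : (N-1)*(2*t)*5 < (η^2/8)*(1/N) := by
      rw [ht_def]
      rw [show (N-1)*(2*(η^2/(160*N^2)))*5 = (N-1)*η^2/(16*N^2) by
        field_simp; ring]
      rw [show (η^2/8)*(1/N) = η^2/(8*N) by field_simp]
      rw [div_lt_div_iff₀ (by positivity) (by positivity)]
      nlinarith [mul_pos hη hη, hN0, hN2, mul_pos (mul_pos hη hη) hN0]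
    linarith only [hG, hid, hD1, hD2, hfin]
  · -- subcase a > 1/(2N)
    have ha0 : 0 < a := lt_trans (by positivity) hcc
    have hMneg : M - 1/N < 0 := by
      rw [hMP]
      apply mul_neg_of_pos_of_neg ht
      linarith
    have hD1 : 2*(a+1)*(a-1/N) ≤ 0 := by
      have haln : a < 1/N := by linarith only [hB, hMneg]
      have h1 : (a+1)*(a-1/N) < 0 :=
        mul_neg_of_pos_of_neg (by linarith) (by linarith)
      linarith
    have hMpos : 0 < M := lt_trans ha0 hB
    have hFpos : 0 < N*M + 1 + 2*a := by positivity
    have hD2 : (N-1)*(M - 1/N)*(N*M + 1 + 2*a) < 0 :=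
      mul_neg_of_neg_of_pos (mul_neg_of_pos_of_neg (by linarith) hMneg) hFpos
    linarith only [hG, hid, hD1, hD2]

/-- Pure numerical facts about the chosen constants. -/
private lemma const_facts {N η : ℝ} (hN2 : 2 ≤ N) (hη : 0 < η) (hηle : η ≤ 2) :
    0 < η^2/(160*N^2) ∧ (η^2/(160*N^2))/(2*N) + η^2/(160*N^2) ≤ η/2 := by
  have hN0 : (0:ℝ) < N := by linarith
  constructor
  · positivity
  · set t : ℝ := η^2/(160*N^2) with ht_def
    have ht : 0 < t := by rw [ht_def]; positivity
    have hsle : t/(2*N) ≤ t := by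
      apply div_le_self ht.le
      linarith
    have htle : t ≤ η/4 := by
      rw [ht_def]
      rw [div_le_div_iff₀ (by positivity) (by norm_num : (0:ℝ) < 4)]
      nlinarith [sq_nonneg (N - 2), hη.le, hηle]
    linarith

/-- The support claim: for every unit vector `v`, some point of `{q} ∪ vertices` has
support at least that of the enlarged inscribed ball. -/
private lemma support_claim {n : ℕ} (hn : 2 ≤ n) {p : Fin (n + 1) → E n}
    (hnormi : ∀ i, ‖p i‖ = 1)
    (hframe : ∀ u : E n, ∑ j, ⟪p j, u⟫ • p j = (((n : ℝ) + 1) / n) • u)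
    (hsum : (∑ i, p i) = 0)
    {q : E n} (hq1 : ‖q‖ ≤ 1) {i₀ : Fin (n+1)} {η t s : ℝ}
    (hη_def : η = -⟪p i₀, q⟫ - 1/(n:ℝ)) (hη : 0 < η) (hηle : η ≤ 2)
    (ht_def : t = η^2 / (160 * (n:ℝ)^2)) (hs_def : s = t / (2*(n:ℝ)))
    (v : E n) (hv : ‖v‖ = 1) :
    ∃ z ∈ insert q (Set.range p), 1/(n:ℝ) + s - t * ⟪v, p i₀⟫ ≤ ⟪v, z⟫ := by
  have hN0 : (0:ℝ) < (n:ℝ) := by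
    have : (0:ℕ) < n := by omega
    exact_mod_cast this
  have hN2 : (2:ℝ) ≤ (n:ℝ) := by exact_mod_cast hn
  have ht : 0 < t := by rw [ht_def]; positivity
  have hs : 0 < s := by rw [hs_def]; positivity
  have hst : s + t ≤ η/2 := by
    have h := (const_facts hN2 hη hηle).2
    rw [ht_def, hs_def, ht_def]
    exact h
  set a : ℝ := ⟪v, p i₀⟫ with ha_def
  have ha1 : |a| ≤ 1 := by
    have h := abs_real_inner_le_norm v (p i₀)
    rw [hv, hnormi i₀, one_mul] at h
    rw [ha_def]
    linarith
  have haL : -1 ≤ a := (abs_le.mp ha1).1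
  have haU : a ≤ 1 := (abs_le.mp ha1).2
  by_cases hA : a ≤ -1 + η^2/8
  · refine ⟨q, Set.mem_insert _ _, ?_⟩
    have hnv : ‖v + p i₀‖^2 = 2 + 2*a := by
      rw [norm_add_sq_real, hv, hnormi i₀]; ring
    have hnv2 : ‖v + p i₀‖ ≤ η/2 := by
      apply sq_le_imp (norm_nonneg _) (by positivity)
      rw [hnv]
      nlinarith [hA]
    have hiq : |⟪v + p i₀, q⟫| ≤ η/2 := by
      calc |⟪v + p i₀, q⟫| ≤ ‖v + p i₀‖ * ‖q‖ := abs_real_inner_le_norm _ _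
      _ ≤ (η/2) * 1 := mul_le_mul hnv2 hq1 (norm_nonneg _) (by positivity)
      _ = η/2 := mul_one _
    have h1 : -(η/2) ≤ ⟪v + p i₀, q⟫ := (abs_le.mp hiq).1
    have hvq : ⟪v, q⟫ = ⟪v + p i₀, q⟫ + 1/(n:ℝ) + η := by
      rw [inner_add_left]
      have : ⟪p i₀, q⟫ = -(1/(n:ℝ)) - η := by rw [hη_def]; ring
      rw [this]
      ring
    have hta : -(t*a) ≤ t := by nlinarith [ht.le]
    rw [hvq]
    linarith
  · push_neg at hA
    by_cases hB : 1/(n:ℝ) + s - t * a ≤ a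
    · exact ⟨p i₀, Set.mem_insert_of_mem _ (Set.mem_range_self i₀), hB⟩
    · push_neg at hB
      by_contra hcon
      push_neg at hcon
      set m : Fin (n+1) → ℝ := fun j => ⟪v, p j⟫ with hm_def
      set M : ℝ := 1/(n:ℝ) + s - t * a with hM_def
      have hmlt : ∀ j, m j < M :=
        fun j => hcon _ (Set.mem_insert_of_mem _ ⟨j, rfl⟩)
      have hs0 : ∑ j, m j = 0 := by
        simp only [hm_def]
        rw [← inner_sum, hsum, inner_zero_right]
      have hs2 : ∑ j, (m j)^2 = ((n:ℝ)+1)/(n:ℝ) := by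
        have h1 : ⟪v, ∑ j, ⟪p j, v⟫ • p j⟫ = ∑ j, (m j)^2 := by
          rw [inner_sum]
          refine Finset.sum_congr rfl fun j _ => ?_
          have hco := real_inner_comm (p j) v
          simp only [hm_def, real_inner_smul_right, hco]
          ring
        rw [hframe v, real_inner_smul_right, real_inner_self_eq_norm_sq, hv,
          one_pow, mul_one] at h1
        linarith [h1]
      have hmi₀ : m i₀ = a := by simp only [hm_def, ha_def]
      have hesum : ∑ j ∈ Finset.univ.erase i₀, m j = -a := by
        have h := Finset.sum_erase_add Finset.univ m (Finset.mem_univ i₀)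
        rw [hs0, hmi₀] at h
        linarith
      have hesq : ∑ j ∈ Finset.univ.erase i₀, (m j)^2 = ((n:ℝ)+1)/(n:ℝ) - a^2 := by
        have h : (∑ j ∈ Finset.univ.erase i₀, (m j)^2) + (m i₀)^2 = ∑ j, (m j)^2 :=
          Finset.sum_erase_add _ _ (Finset.mem_univ i₀)
        rw [hs2, hmi₀] at h
        linarith
      have hcard : (Finset.univ.erase i₀).card = n := by
        rw [Finset.card_erase_of_mem (Finset.mem_univ i₀), Finset.card_univ,
          Fintype.card_fin]
        omega
      set L : ℝ := ((n:ℝ) - 1) * M + a with hL_def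
      have hlb : ∀ j ∈ Finset.univ.erase i₀, -L ≤ m j := by
        intro j hj
        have h1 := Finset.sum_erase_add (Finset.univ.erase i₀) m hj
        have h2 : ∑ k ∈ (Finset.univ.erase i₀).erase j, m k ≤ ((n:ℝ)-1) * M := by
          have hcard2 : ((Finset.univ.erase i₀).erase j).card = n - 1 := by
            rw [Finset.card_erase_of_mem hj, hcard]
          have h := Finset.sum_le_card_nsmul ((Finset.univ.erase i₀).erase j) m M
            (fun k _ => (hmlt k).le)
          rw [hcard2, nsmul_eq_mul] at h
          have hcast : ((n - 1 : ℕ) : ℝ) = (n:ℝ) - 1 := by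
            have h1n : (1:ℕ) ≤ n := by omega
            push_cast [Nat.cast_sub h1n]
            ring
          rwa [hcast] at h
        rw [hesum] at h1
        rw [hL_def]
        linarith
      have hkey : ∑ j ∈ Finset.univ.erase i₀, (m j)^2
          ≤ (M - L) * (-a) + (n:ℝ) * (M * L) := by
        calc ∑ j ∈ Finset.univ.erase i₀, (m j)^2
            ≤ ∑ j ∈ Finset.univ.erase i₀, ((M - L) * m j + M * L) := by
              apply Finset.sum_le_sum
              intro j hj
              nlinarith [hmlt j, hlb j hj]
        _ = (M - L) * (∑ j ∈ Finset.univ.erase i₀, m j)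
            + (n:ℝ) * (M * L) := by
              rw [Finset.sum_add_distrib, ← Finset.mul_sum, Finset.sum_const, hcard,
                nsmul_eq_mul]
        _ = (M - L) * (-a) + (n:ℝ) * (M * L) := by rw [hesum]
      have hG : ((n:ℝ)+1)/(n:ℝ)
          ≤ 2*a^2 + (n:ℝ)*((n:ℝ)-1)*M^2 + 2*((n:ℝ)-1)*a*M := by
        have hexp : (M - L) * (-a) + (n:ℝ) * (M * L)
            = a^2 + (n:ℝ)*((n:ℝ)-1)*M^2 + 2*((n:ℝ)-1)*a*M := by
          rw [hL_def]; ring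
        rw [hesq, hexp] at hkey
        linarith
      exact caseB_num hN2 hη hηle ht_def hs_def hM_def hA hB haU haL hG

theorem stmt16 {n : ℕ} (hn : 2 ≤ n) (T K : Set (E n)) (hT : IsRegularSimplex T)
    (hcbT : IsCircumball T 0 1) (hK : IsCompact K) (hKc : Convex ℝ K)
    (hcbK : IsCircumball K 0 1) (hTK : T ⊆ K)
    (hD : Metric.diam K = Metric.diam T) (hr : inradius K = inradius T) :
    K = T := by
  classical
  obtain ⟨p, hindep, ⟨d, hd⟩, hTe⟩ := hT
  have hN0 : (0:ℝ) < (n:ℝ) := by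
    have : (0:ℕ) < n := by omega
    exact_mod_cast this
  have hN2 : (2:ℝ) ≤ (n:ℝ) := by exact_mod_cast hn
  have hvert : ∀ i, p i ∈ T := fun i => hTe ▸ subset_convexHull ℝ _ (Set.mem_range_self i)
  have hb1 : ∀ i, ‖p i‖ ≤ 1 := by
    intro i
    have := hcbT.1 (hvert i)
    rwa [mem_closedBall, dist_zero_right] at this
  have hmin : ∀ c' r', convexHull ℝ (Set.range p) ⊆ closedBall c' r' → (1:ℝ) ≤ r' := by
    intro c' r' hsub
    exact hcbT.2 c' r' (by rw [hTe]; exact hsub)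
  obtain ⟨hnormi, hijinner, hS0⟩ := vertex_facts hn hd hb1 hmin
  -- span facts
  have htop : affineSpan ℝ (Set.range p) = ⊤ := by
    rw [hindep.affineSpan_eq_top_iff_card_eq_finrank_add_one]
    simp [finrank_euclideanSpace_fin]
  have hspan : Submodule.span ℝ (Set.range p) = ⊤ := by
    have hv := AffineSubspace.vectorSpan_eq_top_of_affineSpan_eq_top ℝ _ _ htop
    rw [eq_top_iff, ← hv, vectorSpan_def]
    apply Submodule.span_le.mpr
    rintro x hx
    rw [Set.mem_vsub] at hx
    obtain ⟨u, hu, w, hw, rfl⟩ := hx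
    exact Submodule.sub_mem _ (Submodule.subset_span hu) (Submodule.subset_span hw)
  have hframe : ∀ u : E n, ∑ j, ⟪p j, u⟫ • p j = (((n : ℝ) + 1) / n) • u :=
    frame_id hn hspan hnormi hijinner hS0
  have hsin : ∀ x : E n, ∑ i, ⟪p i, x⟫ = 0 := by
    intro x
    rw [← sum_inner, hS0, inner_zero_left]
  -- halfspace description of T
  have hmemT : ∀ x : E n, (∀ i, -(1/(n:ℝ)) ≤ ⟪p i, x⟫) → x ∈ T := by
    intro x hx
    rw [hTe]
    exact mem_of_halfspaces hn hframe hS0 x hx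
  have hTsub : ∀ x ∈ T, ∀ i, -(1/(n:ℝ)) ≤ ⟪p i, x⟫ := by
    intro x hxT i
    have hsubset : T ⊆ {y : E n | -(1/(n:ℝ)) ≤ ⟪p i, y⟫} := by
      rw [hTe]
      apply convexHull_min
      · rintro y ⟨j, rfl⟩
        by_cases hji : j = i
        · subst hji
          have h1 : ⟪p j, p j⟫ = 1 := by
            rw [real_inner_self_eq_norm_sq, hnormi j]; norm_num
          rw [Set.mem_setOf_eq, h1]
          have : (0:ℝ) < 1/(n:ℝ) := by positivity
          linarith
        · rw [Set.mem_setOf_eq, hijinner i j (fun h => hji h.symm)]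
      · exact convex_halfSpace_ge
          ⟨fun a b => inner_add_right _ _ _, fun c a => real_inner_smul_right _ _ _⟩ _
    exact hsubset hxT
  -- inradius T ≤ 1/n
  have hinT : inradius T ≤ 1/(n:ℝ) := by
    apply Real.sSup_le _ (by positivity)
    rintro r ⟨c, hc⟩
    rcases le_or_gt r 0 with hrle | hrpos
    · have : (0:ℝ) < 1/(n:ℝ) := by positivity
      linarith
    · have hmem : ∀ i, -(1/(n:ℝ)) ≤ ⟪p i, c⟫ - r := by
        intro i
        have hxmem : c - r • p i ∈ closedBall c r := by
          rw [mem_closedBall, dist_eq_norm]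
          have heq : c - r • p i - c = -(r • p i) := by abel
          rw [heq, norm_neg, norm_smul, hnormi i, mul_one, Real.norm_eq_abs,
            abs_of_pos hrpos]
        have hxT := hc hxmem
        have := hTsub _ hxT i
        rwa [inner_sub_right, real_inner_smul_right, real_inner_self_eq_norm_sq,
          hnormi i, one_pow, mul_one] at this
      have hsumle : ((n:ℝ)+1) * (-(1/(n:ℝ))) ≤ ∑ i, (⟪p i, c⟫ - r) := by
        have h := Finset.card_nsmul_le_sum Finset.univ (fun i => ⟪p i, c⟫ - r)
          (-(1/(n:ℝ))) (fun i _ => hmem i)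
        rw [Finset.card_univ, Fintype.card_fin, nsmul_eq_mul] at h
        push_cast at h
        linarith
      have hsumeq : ∑ i, (⟪p i, c⟫ - r) = -(((n:ℝ)+1) * r) := by
        rw [Finset.sum_sub_distrib, hsin c, Finset.sum_const, Finset.card_univ,
          Fintype.card_fin, nsmul_eq_mul, zero_sub]
        push_cast
        ring
      rw [hsumeq] at hsumle
      have hn1pos : (0:ℝ) < (n:ℝ)+1 := by positivity
      nlinarith [hsumle, hn1pos]
  -- radii of balls inside K are at most 1
  have hbddK : ∀ r ∈ {r : ℝ | ∃ c : E n, closedBall c r ⊆ K}, r ≤ 1 := by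
    rintro r ⟨c, hc⟩
    rcases le_or_gt r 0 with hrle | hrpos
    · linarith
    · set e : E n := EuclideanSpace.single (⟨0, by omega⟩ : Fin n) (1:ℝ) with he_def
      have he : ‖e‖ = 1 := by
        rw [he_def, EuclideanSpace.norm_single, norm_one]
      have hmem1 : c + r • e ∈ closedBall c r := by
        rw [mem_closedBall, dist_eq_norm]
        have heq : c + r • e - c = r • e := by abel
        rw [heq, norm_smul, he, mul_one, Real.norm_eq_abs, abs_of_pos hrpos]
      have hmem2 : c - r • e ∈ closedBall c r := by
        rw [mem_closedBall, dist_eq_norm]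
        have heq : c - r • e - c = -(r • e) := by abel
        rw [heq, norm_neg, norm_smul, he, mul_one, Real.norm_eq_abs, abs_of_pos hrpos]
      have h1 : ‖c + r • e‖ ≤ 1 := by
        have := hcbK.1 (hc hmem1)
        rwa [mem_closedBall, dist_zero_right] at this
      have h2 : ‖c - r • e‖ ≤ 1 := by
        have := hcbK.1 (hc hmem2)
        rwa [mem_closedBall, dist_zero_right] at this
      have hdiff : (c + r • e) - (c - r • e) = (2*r) • e := by
        rw [two_mul, add_smul]
        abel
      have hle2 : ‖(c + r • e) - (c - r • e)‖ ≤ 2 := by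
        calc ‖(c + r • e) - (c - r • e)‖ ≤ ‖c + r • e‖ + ‖c - r • e‖ := norm_sub_le _ _
        _ ≤ 2 := by linarith
      rw [hdiff, norm_smul, he, mul_one, Real.norm_eq_abs, abs_of_pos (by linarith)] at hle2
      linarith
  -- Main inclusion K ⊆ T
  have hKT : K ⊆ T := by
    intro q hqK
    by_contra hqT
    have hex : ∃ i, ⟪p i, q⟫ < -(1/(n:ℝ)) := by
      by_contra hno
      push_neg at hno
      exact hqT (hmemT q hno)
    obtain ⟨i₀, hi₀⟩ := hex
    have hq1 : ‖q‖ ≤ 1 := by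
      have := hcbK.1 hqK
      rwa [mem_closedBall, dist_zero_right] at this
    set η : ℝ := -⟪p i₀, q⟫ - 1/(n:ℝ) with hη_def
    have hη : 0 < η := by rw [hη_def]; linarith
    have hηle : η ≤ 2 := by
      have habs := abs_real_inner_le_norm (p i₀) q
      rw [hnormi i₀, one_mul] at habs
      have h1 : -⟪p i₀, q⟫ ≤ 1 := by
        have := (abs_le.mp (le_trans habs hq1)).1
        linarith
      have h2 : (0:ℝ) < 1/(n:ℝ) := by positivity
      rw [hη_def]
      linarith
    set t : ℝ := η^2 / (160 * (n:ℝ)^2) with ht_def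
    have ht : 0 < t := by rw [ht_def]; positivity
    set s : ℝ := t / (2*(n:ℝ)) with hs_def
    have hs : 0 < s := by rw [hs_def]; positivity
    have claim := support_claim hn hnormi hframe hS0 hq1 hη_def hη hηle ht_def hs_def
    -- the enlarged inball is contained in K
    have hball : closedBall ((-t) • p i₀) (1/(n:ℝ) + s) ⊆ K := by
      intro y hy
      by_contra hyK
      obtain ⟨f, u₀, hfK, hfy⟩ := geometric_hahn_banach_closed_point hKc hK.isClosed hyK
      obtain ⟨v, hvf⟩ := (InnerProductSpace.toDual ℝ (E n)).surjective f
      have hfx : ∀ x, ⟪v, x⟫ = f x := by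
        intro x
        rw [← hvf]
        rfl
      have hv0 : v ≠ 0 := by
        intro h0
        have hq' := hfK q hqK
        have h1 : f q = 0 := by rw [← hfx q, h0, inner_zero_left]
        have h2 : f y = 0 := by rw [← hfx y, h0, inner_zero_left]
        rw [h1] at hq'
        rw [h2] at hfy
        linarith
      have hvpos : 0 < ‖v‖ := norm_pos_iff.mpr hv0
      set w : E n := (‖v‖⁻¹ : ℝ) • v with hw_def
      have hw : ‖w‖ = 1 := by
        rw [hw_def, norm_smul, Real.norm_eq_abs, abs_of_pos (by positivity),
          inv_mul_cancel₀ hvpos.ne']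
      obtain ⟨z, hzmem, hz2⟩ := claim w hw
      have hzK : z ∈ K := by
        rcases hzmem with h | h
        · rw [h]; exact hqK
        · obtain ⟨j, rfl⟩ := h
          exact hTK (hvert j)
      have e1 : ⟪w, p i₀⟫ = ‖v‖⁻¹ * ⟪v, p i₀⟫ := by
        rw [hw_def, real_inner_smul_left]
      have e2 : ⟪w, z⟫ = ‖v‖⁻¹ * ⟪v, z⟫ := by
        rw [hw_def, real_inner_smul_left]
      rw [e1, e2] at hz2
      have hz3 : ‖v‖ * (1/(n:ℝ) + s) - t * ⟪v, p i₀⟫ ≤ ⟪v, z⟫ := by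
        have hmul := mul_le_mul_of_nonneg_left hz2 hvpos.le
        have hA' : ‖v‖ * (1/(n:ℝ) + s - t * (‖v‖⁻¹ * ⟪v, p i₀⟫))
            = ‖v‖*(1/(n:ℝ)+s) - (‖v‖*‖v‖⁻¹) * (t * ⟪v, p i₀⟫) := by ring
        have hB' : ‖v‖ * (‖v‖⁻¹ * ⟪v, z⟫) = (‖v‖*‖v‖⁻¹) * ⟪v, z⟫ := by ring
        rw [hA', hB', mul_inv_cancel₀ hvpos.ne', one_mul, one_mul] at hmul
        linarith
      have hbz : f z < u₀ := hfK z hzK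
      have hyb : ‖y - (-t) • p i₀‖ ≤ 1/(n:ℝ) + s := by
        rw [mem_closedBall, dist_eq_norm] at hy
        exact hy
      have hyv : ⟪v, y⟫ ≤ ‖v‖ * (1/(n:ℝ) + s) + (-t * ⟪v, p i₀⟫) := by
        have h1 : ⟪v, y - (-t) • p i₀⟫ ≤ ‖v‖ * ‖y - (-t) • p i₀‖ :=
          real_inner_le_norm _ _
        have h2 : ‖v‖ * ‖y - (-t) • p i₀‖ ≤ ‖v‖ * (1/(n:ℝ) + s) :=
          mul_le_mul_of_nonneg_left hyb hvpos.le
        have h3 : ⟪v, y - (-t) • p i₀⟫ = ⟪v, y⟫ - ⟪v, (-t) • p i₀⟫ :=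
          inner_sub_right _ _ _
        have h4 : ⟪v, (-t) • p i₀⟫ = -t * ⟪v, p i₀⟫ := real_inner_smul_right _ _ _
        rw [h3, h4] at h1
        linarith
      have hfz : ⟪v, z⟫ = f z := hfx z
      have hfyv : ⟪v, y⟫ = f y := hfx y
      rw [hfz] at hz3
      rw [hfyv] at hyv
      linarith
    -- conclude the contradiction
    have hmemset : (1/(n:ℝ) + s) ∈ {r : ℝ | ∃ c : E n, closedBall c r ⊆ K} :=
      ⟨_, hball⟩
    have hle : 1/(n:ℝ) + s ≤ inradius K :=
      le_csSup ⟨1, fun r hr' => hbddK r hr'⟩ hmemset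
    rw [hr] at hle
    linarith [hinT, hs]
  exact Set.Subset.antisymm hKT hTK
end
end

section
/- Let K, L be convex bodies in ℝⁿ with inradii r(K), r(L) and circumradii R(K), R(L), and let ⊙ = ⊙(K,L) be the similarity-invariant pseudometric (defined as inf over σ ∈ O(n) of the Hausdorff distance between the normalized copies (K − č(K))/R(K) and σ(L − č(L))/R(L)). Then the similarity distance d_S(K,L) = inf{α ≥ 1 : K ⊆ gL ⊆ αK + z, g a similarity, z ∈ ℝⁿ} satisfies d_S(K,L) ≤ (1 + (R(K)/r(K))·⊙)(1 + (R(L)/r(L))·⊙). -/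
open Metric Set

noncomputable section

/-- The similarity distance `d_{Sim(n)}(K,L)`. -/
def simDist {n : ℕ} (K L : Set (E n)) : ℝ :=
  sInf {α : ℝ | 1 ≤ α ∧ ∃ (g : E n → E n) (z : E n), IsSimilarity g ∧
    K ⊆ g '' L ∧ g '' L ⊆ (fun x => α • x + z) '' K}

/-!
Normalize `K` and `L` by their circumballs and rotate `K` so that the two normalized copies are
within Hausdorff distance `s > ⊙`. They contain balls of radii `r(K)/R(K)` and `r(L)/R(L)`, and a
convex set containing a ball of radius `ρ` about `p` contains its own `s`-neighbourhood after a
homothety of ratio `1 + s/ρ` about `p`. This gives two mutual inclusions up to homotheties;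
pulling them back by the normalizing similarities shows
`d_S(K,L) ≤ (1 + R(K) s / r(K)) (1 + R(L) s / r(L))`, and `s ↓ ⊙` finishes.
-/

open AffineMap (homothety homothety_apply)

section Normed

variable {V : Type*} [NormedAddCommGroup V] [NormedSpace ℝ V]

lemma Convex.mem_homothety_image_of_dist_le {B : Set V} (hB : Convex ℝ B) {p : V} {ρ s : ℝ}
    (hρ : 0 < ρ) (hs : 0 < s) (hball : closedBall p ρ ⊆ B) {x y : V} (hy : y ∈ B)
    (hxy : dist x y ≤ s) : x ∈ homothety p (1 + s / ρ) '' B := by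
  have hz : p + (ρ / s) • (x - y) ∈ B := by
    apply hball
    rw [mem_closedBall, dist_eq_norm, add_sub_cancel_left, norm_smul, Real.norm_eq_abs,
      abs_of_pos (div_pos hρ hs), ← dist_eq_norm]
    calc ρ / s * dist x y ≤ ρ / s * s := by gcongr
      _ = ρ := div_mul_cancel₀ ρ hs.ne'
  -- `x` is the image of the convex combination of `y` and this inball point with weights in
  -- the ratio `1 : s / ρ`.
  refine ⟨(1 + s / ρ)⁻¹ • y + (s / ρ * (1 + s / ρ)⁻¹) • (p + (ρ / s) • (x - y)),
    hB hy hz (by positivity) (by positivity) (by field_simp), ?_⟩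
  rw [homothety_apply, vsub_eq_sub, vadd_eq_add]
  match_scalars <;> field_simp <;> ring

lemma Convex.subset_homothety_image_of_hausdorffDist_lt {A B : Set V} (hB : Convex ℝ B) {p : V}
    {ρ s : ℝ} (hρ : 0 < ρ) (hball : closedBall p ρ ⊆ B) (hAB : hausdorffEDist A B ≠ ⊤)
    (h : hausdorffDist A B < s) :
    A ⊆ homothety p (1 + s / ρ) '' B := fun x hx => by
  obtain ⟨y, hy, hxy⟩ := exists_dist_lt_of_hausdorffDist_lt hx h hAB
  exact hB.mem_homothety_image_of_dist_le hρ (hausdorffDist_nonneg.trans_lt h) hball hy hxy.le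

lemma closedBall_infDist_compl_subset {K : Set V} (hK : IsClosed K) {c : V} (hc : c ∈ K) :
    closedBall c (infDist c Kᶜ) ⊆ K := by
  rcases eq_or_ne (infDist c Kᶜ) 0 with h | h
  · simpa [h] using hc
  · rw [← closure_ball c h]
    exact hK.closure_subset_iff.2 ball_infDist_compl_subset

lemma nontrivial_of_interior_nonempty [Nontrivial V] {A : Set V} (hA : (interior A).Nonempty) :
    A.Nontrivial :=
  let ⟨x, hx⟩ := hA
  (infinite_of_mem_nhds x (mem_interior_iff_mem_nhds.1 hx)).nontrivial

end Normed

lemma le_infDist_compl_of_closedBall_subset {X : Type*} [PseudoMetricSpace X] {K : Set X}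
    {c : X} {r : ℝ} (hK : Kᶜ.Nonempty) (h : closedBall c r ⊆ K) : r ≤ infDist c Kᶜ :=
  (le_infDist hK).2 fun _ hy => not_lt.1 fun hlt => hy (h (mem_closedBall'.2 hlt.le))

lemma Set.Nontrivial.pos_of_subset_closedBall {X : Type*} [MetricSpace X] {A : Set X}
    (hA : A.Nontrivial) {c : X} {r : ℝ} (h : A ⊆ closedBall c r) : 0 < r :=
  lt_of_not_ge fun hr => hA.not_subsingleton ((subsingleton_closedBall c hr).anti h)

lemma exists_closedBall_inradius_subset {n : ℕ} [Nontrivial (E n)] {K : Set (E n)}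
    (hK : IsCompact K) (hKi : (interior K).Nonempty) :
    0 < inradius K ∧ ∃ p, closedBall p (inradius K) ⊆ K := by
  have hKc : Kᶜ.Nonempty := nonempty_compl.2 hK.ne_univ
  obtain ⟨x, hx⟩ := hKi
  obtain ⟨p, hpK, hp⟩ :=
    hK.exists_isMaxOn ⟨x, interior_subset hx⟩ (continuous_infDist_pt Kᶜ).continuousOn
  -- the inradius is the maximum over `K` of the distance to `Kᶜ`
  have hgreatest : IsGreatest {r | ∃ c, closedBall c r ⊆ K} (infDist p Kᶜ) := by
    refine ⟨⟨p, closedBall_infDist_compl_subset hK.isClosed hpK⟩, ?_⟩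
    rintro r ⟨c, hc⟩
    rcases lt_or_ge r 0 with hr | hr
    · exact hr.le.trans infDist_nonneg
    · exact (le_infDist_compl_of_closedBall_subset hKc hc).trans
        (hp (hc (mem_closedBall_self hr)))
  have hx0 : 0 < infDist x Kᶜ :=
    (infDist_pos_iff_notMem_closure hKc).1 (by rwa [closure_compl, notMem_compl_iff])
  rw [inradius, hgreatest.csSup_eq]
  exact ⟨hx0.trans_le (hp (interior_subset hx)), hgreatest.1⟩

namespace IsSimilarity

variable {n : ℕ} {g h : E n → E n}

lemma comp (hg : IsSimilarity g) (hh : IsSimilarity h) : IsSimilarity (g ∘ h) := by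
  obtain ⟨u, l, σ, hl, hg⟩ := hg
  obtain ⟨v, m, τ, hm, hh⟩ := hh
  refine ⟨u + l • σ v, l * m, τ.trans σ, mul_pos hl hm, fun x => ?_⟩
  simp only [Function.comp_apply, hg, hh, map_add, map_smul, LinearIsometryEquiv.trans_apply]
  module

lemma exists_leftInverse (hg : IsSimilarity g) :
    ∃ g', IsSimilarity g' ∧ Function.LeftInverse g' g := by
  obtain ⟨u, l, σ, hl, hg⟩ := hg
  refine ⟨fun y => -(l⁻¹ • σ.symm u) + l⁻¹ • σ.symm y, ⟨_, _, _, inv_pos.2 hl, fun _ => rfl⟩,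
    fun x => ?_⟩
  simp only [hg, map_add, map_smul, LinearIsometryEquiv.symm_apply_apply]
  rw [smul_add, smul_smul, inv_mul_cancel₀ hl.ne', one_smul]
  abel

lemma image_homothety_image (hg : IsSimilarity g) (a : E n) (α : ℝ) (S : Set (E n)) :
    g '' (homothety a α '' S) = homothety (g a) α '' (g '' S) := by
  obtain ⟨u, l, σ, -, hg⟩ := hg
  simp only [image_image]
  congr! 1 with x
  simp only [hg, homothety_apply, vsub_eq_sub, vadd_eq_add, map_add, map_sub, map_smul]
  module

lemma convex_image (hg : IsSimilarity g) {A : Set (E n)} (hA : Convex ℝ A) :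
    Convex ℝ (g '' A) := by
  obtain ⟨u, l, σ, -, hg⟩ := hg
  rintro _ ⟨x, hx, rfl⟩ _ ⟨y, hy, rfl⟩ a b ha hb hab
  refine ⟨a • x + b • y, hA hx hy ha hb hab, ?_⟩
  simp only [hg, map_add, map_smul]
  linear_combination (norm := module) -(hab • u)

end IsSimilarity

lemma isSimilarity_homothety {n : ℕ} (a : E n) {α : ℝ} (hα : 0 < α) :
    IsSimilarity (homothety a α) :=
  ⟨a - α • a, α, LinearIsometryEquiv.refl ℝ (E n), hα, fun x => by
    simp only [homothety_apply, vsub_eq_sub, vadd_eq_add, LinearIsometryEquiv.coe_refl, id]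
    module⟩

lemma isSimilarity_normalize {n : ℕ} (σ : E n ≃ₗᵢ[ℝ] E n) {R : ℝ} (hR : 0 < R) (c : E n) :
    IsSimilarity fun x => σ (R⁻¹ • (x - c)) :=
  ⟨-(R⁻¹ • σ c), R⁻¹, σ, inv_pos.2 hR, fun x => by
    simp only [map_smul, map_sub]
    module⟩

lemma closedBall_subset_image_normalize {n : ℕ} (σ : E n ≃ₗᵢ[ℝ] E n) {R : ℝ} (hR : 0 < R)
    (c p : E n) (r : ℝ) :
    closedBall (σ (R⁻¹ • (p - c))) (r / R) ⊆ (fun x => σ (R⁻¹ • (x - c))) '' closedBall p r := by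
  intro y hy
  refine ⟨R • σ.symm y + c, ?_, by simp [smul_smul, inv_mul_cancel₀ hR.ne']⟩
  have hdist : ∀ x, dist (σ (R⁻¹ • (x - c))) (σ (R⁻¹ • (p - c))) = R⁻¹ * dist x p := by
    intro x
    rw [σ.dist_map, dist_smul₀, dist_sub_right, Real.norm_eq_abs, abs_of_pos (inv_pos.2 hR)]
  rw [mem_closedBall, ← mul_le_mul_iff_of_pos_left (inv_pos.2 hR), ← hdist]
  simpa [smul_smul, inv_mul_cancel₀ hR.ne', div_eq_inv_mul] using hy

section SimDist

variable {n : ℕ} {K L : Set (E n)} {a b : E n} {α β : ℝ}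

lemma simDist_le_mul_of_subset_homothety_image {g : E n → E n} (hg : IsSimilarity g)
    (hα : 1 ≤ α) (hβ : 1 ≤ β) (hKL : K ⊆ homothety a α '' (g '' L))
    (hLK : g '' L ⊆ homothety b β '' K) : simDist K L ≤ α * β := by
  have hgL : (homothety a α ∘ g) '' L ⊆
      (fun x => (α * β) • x + (α • (b - a) + a - (α * β) • b)) '' K :=
    calc (homothety a α ∘ g) '' L = homothety a α '' (g '' L) := image_comp _ _ _
      _ ⊆ homothety a α '' (homothety b β '' K) := image_mono hLK
      _ = _ := by
        rw [image_image]
        congr! 1 with x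
        simp only [homothety_apply, vsub_eq_sub, vadd_eq_add]
        module
  exact csInf_le ⟨1, fun _ h => h.1⟩ ⟨one_le_mul_of_one_le_of_one_le hα hβ, _, _,
    (isSimilarity_homothety a (by linarith)).comp hg, by rwa [image_comp], hgL⟩

lemma simDist_le_mul_of_image_subset_homothety_image {φ ψ : E n → E n} (hφ : IsSimilarity φ)
    (hψ : IsSimilarity ψ) (hα : 1 ≤ α) (hβ : 1 ≤ β) (hKL : φ '' K ⊆ homothety a α '' (ψ '' L))
    (hLK : ψ '' L ⊆ homothety b β '' (φ '' K)) : simDist K L ≤ α * β := by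
  obtain ⟨φ', hφ', hφφ'⟩ := hφ.exists_leftInverse
  have hK : φ' '' (φ '' K) = K := hφφ'.image_image K
  refine simDist_le_mul_of_subset_homothety_image (g := φ' ∘ ψ) (a := φ' a) (b := φ' b)
    (hφ'.comp hψ) hα hβ ?_ ?_
  · rw [← hK, image_comp, ← hφ'.image_homothety_image]
    exact image_mono hKL
  · conv_rhs => rw [← hK, ← hφ'.image_homothety_image]
    rw [image_comp]
    exact image_mono hLK

lemma simDist_le_of_hausdorffDist_image_lt {φ ψ : E n → E n} (hφ : IsSimilarity φ)
    (hψ : IsSimilarity ψ) (hKc : Convex ℝ (φ '' K)) (hLc : Convex ℝ (ψ '' L)) {ρK ρL : ℝ}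
    (hρK : 0 < ρK) (hρL : 0 < ρL) (hballK : closedBall a ρK ⊆ φ '' K)
    (hballL : closedBall b ρL ⊆ ψ '' L) (hfin : hausdorffEDist (φ '' K) (ψ '' L) ≠ ⊤) {s : ℝ}
    (hs : hausdorffDist (φ '' K) (ψ '' L) < s) :
    simDist K L ≤ (1 + s / ρL) * (1 + s / ρK) := by
  have hs0 : 0 ≤ s := hausdorffDist_nonneg.trans hs.le
  refine simDist_le_mul_of_image_subset_homothety_image (a := b) (b := a) hφ hψ
    (le_add_of_nonneg_right (by positivity)) (le_add_of_nonneg_right (by positivity))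
    (hLc.subset_homothety_image_of_hausdorffDist_lt hρL hballL hfin hs) ?_
  rw [hausdorffEDist_comm] at hfin
  rw [hausdorffDist_comm] at hs
  exact hKc.subset_homothety_image_of_hausdorffDist_lt hρK hballK hfin hs

end SimDist

lemma simDist_le_of_hausdorffDist_normalize_lt {n : ℕ} {K L : Set (E n)} (hK : IsCompact K)
    (hKc : Convex ℝ K) (hL : IsCompact L) (hLc : Convex ℝ L) {pK pL : E n} {rK rL : ℝ}
    (hrK : 0 < rK) (hrL : 0 < rL) (hpK : closedBall pK rK ⊆ K) (hpL : closedBall pL rL ⊆ L)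
    {RK RL : ℝ} (hRK : 0 < RK) (hRL : 0 < RL) (σ : E n ≃ₗᵢ[ℝ] E n) (cK cL : E n) {s : ℝ}
    (hs : hausdorffDist (σ '' ((fun x => RK⁻¹ • (x - cK)) '' K))
      ((fun x => RL⁻¹ • (x - cL)) '' L) < s) :
    simDist K L ≤ (1 + RK / rK * s) * (1 + RL / rL * s) := by
  let φ : E n → E n := fun x => σ (RK⁻¹ • (x - cK))
  -- the normalization of `L` involves no rotation
  let ψ : E n → E n := fun x => LinearIsometryEquiv.refl ℝ (E n) (RL⁻¹ • (x - cL))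
  have hφ : IsSimilarity φ := isSimilarity_normalize σ hRK cK
  have hψ : IsSimilarity ψ := isSimilarity_normalize _ hRL cL
  have hKφ : (φ '' K).Nonempty := ⟨_, mem_image_of_mem φ (hpK (mem_closedBall_self hrK.le))⟩
  have hLψ : (ψ '' L).Nonempty := ⟨_, mem_image_of_mem ψ (hpL (mem_closedBall_self hrL.le))⟩
  have hfin : hausdorffEDist (φ '' K) (ψ '' L) ≠ ⊤ :=
    hausdorffEDist_ne_top_of_nonempty_of_bounded hKφ hLψ
      (hK.image (by fun_prop)).isBounded (hL.image (by fun_prop)).isBounded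
  rw [image_image] at hs
  refine (simDist_le_of_hausdorffDist_image_lt hφ hψ (hφ.convex_image hKc)
    (hψ.convex_image hLc) (div_pos hrK hRK) (div_pos hrL hRL)
    ((closedBall_subset_image_normalize σ hRK cK pK rK).trans (image_mono hpK))
    ((closedBall_subset_image_normalize _ hRL cL pL rL).trans (image_mono hpL)) hfin hs).trans_eq ?_
  field_simp

theorem stmt18 {n : ℕ} (hn : 2 ≤ n) (R : Set (E n) → ℝ) (c : Set (E n) → E n)
    (hRc : ∀ A : Set (E n), IsCompact A → Convex ℝ A → A.Nontrivial →
      IsCircumball A (c A) (R A))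
    (K L : Set (E n)) (hK : IsCompact K) (hKc : Convex ℝ K) (hKi : (interior K).Nonempty)
    (hL : IsCompact L) (hLc : Convex ℝ L) (hLi : (interior L).Nonempty)
    (o : ℝ)
    (ho : o = ⨅ σ : E n ≃ₗᵢ[ℝ] E n,
      Metric.hausdorffDist (⇑σ '' ((fun x => (R K)⁻¹ • (x - c K)) '' K))
        ((fun x => (R L)⁻¹ • (x - c L)) '' L)) :
    simDist K L ≤ (1 + (R K / inradius K) * o) * (1 + (R L / inradius L) * o) := by
  -- makes `E n` nontrivial
  have : Nonempty (Fin n) := ⟨⟨0, by omega⟩⟩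
  obtain ⟨hrK, pK, hpK⟩ := exists_closedBall_inradius_subset hK hKi
  obtain ⟨hrL, pL, hpL⟩ := exists_closedBall_inradius_subset hL hLi
  have hR : ∀ A, IsCompact A → Convex ℝ A → (interior A).Nonempty → 0 < R A :=
    fun A hA hAc hAi => (nontrivial_of_interior_nonempty hAi).pos_of_subset_closedBall
      (hRc A hA hAc (nontrivial_of_interior_nonempty hAi)).1
  have key : ∀ s > o,
      simDist K L ≤ (1 + R K / inradius K * s) * (1 + R L / inradius L * s) := by
    intro s hs
    rw [ho] at hs
    obtain ⟨σ, hσ⟩ := exists_lt_of_ciInf_lt hs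
    exact simDist_le_of_hausdorffDist_normalize_lt hK hKc hL hLc hrK hrL hpK hpL
      (hR K hK hKc hKi) (hR L hL hLc hLi) σ (c K) (c L) hσ
  have hcont : Continuous fun s => (1 + R K / inradius K * s) * (1 + R L / inradius L * s) := by
    fun_prop
  exact ge_of_tendsto ((hcont.tendsto o).mono_left nhdsWithin_le_nhds)
    (eventually_nhdsWithin_of_forall (s := Ioi o) key)
end
end
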